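/- arXiv:2308.13689 — 7 statements merged into one kernel-verified Lean document; each statement's English description precedes it below -/
import Mathlib

section
/- Changing thresholds in the distance formula sum (Corollary 'DF accounting'): Let 𝒳 be a hierarchically hyperbolic space. For any K₁ > 50E and K₂ ≥ K₁ + 100E there exist constants A ≥ 1 and B ≥ 0, depending only on K₂ and the HHS, such that for all x, y ∈ 𝒳, both sums below are finite and Σ_{U ∈ 𝔖} [d_U(x, y)]_{K₂} ≤ Σ_{U ∈ 𝔖} [d_U(x, y)]_{K₁} ≤ A·Σ_{U ∈ 𝔖} [d_U(x, y)]_{K₂} + B. -/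
/-- A geodesic from `x` to `y`, parameterized by arclength on `[0, dist x y]`. -/
def IsGeodesicFrom {Y : Type*} [MetricSpace Y] (f : ℝ → Y) (x y : Y) : Prop :=
  f 0 = x ∧ f (dist x y) = y ∧
    ∀ s ∈ Set.Icc (0 : ℝ) (dist x y), ∀ t ∈ Set.Icc (0 : ℝ) (dist x y),
      dist (f s) (f t) = |s - t|

/-- A geodesic metric space: any two points are joined by a geodesic. -/
def IsGeodesicSpace (Y : Type*) [MetricSpace Y] : Prop :=
  ∀ x y : Y, ∃ f : ℝ → Y, IsGeodesicFrom f x y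

/-- δ-hyperbolicity: geodesic triangles are δ-thin. -/
def DeltaHyperbolic (δ : ℝ) (Y : Type*) [MetricSpace Y] : Prop :=
  ∀ x y z : Y, ∀ f g h : ℝ → Y,
    IsGeodesicFrom f x y → IsGeodesicFrom g y z → IsGeodesicFrom h x z →
    ∀ s ∈ Set.Icc (0 : ℝ) (dist x y),
      ∃ p ∈ g '' Set.Icc (0 : ℝ) (dist y z) ∪ h '' Set.Icc (0 : ℝ) (dist x z),
        dist (f s) p ≤ δ

/-- A `k`-quasiconvex subset: geodesics between points of `A` stay `k`-close to `A`. -/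
def QuasiconvexSet {Y : Type*} [MetricSpace Y] (k : ℝ) (A : Set Y) : Prop :=
  ∀ x ∈ A, ∀ y ∈ A, ∀ f : ℝ → Y, IsGeodesicFrom f x y →
    ∀ s ∈ Set.Icc (0 : ℝ) (dist x y), ∃ a ∈ A, dist (f s) a ≤ k

/-- An `(L, C)`-quasigeodesic defined on a subset `D ⊆ ℝ`. -/
def IsQGOn {Y : Type*} [MetricSpace Y] (L C : ℝ) (D : Set ℝ) (q : ℝ → Y) : Prop :=
  ∀ s ∈ D, ∀ t ∈ D,
    |s - t| / L - C ≤ dist (q s) (q t) ∧ dist (q s) (q t) ≤ L * |s - t| + C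

/-- A hierarchically hyperbolic space structure on the metric space `X`, with index set `S`
of domains, and associated uniformly hyperbolic spaces `C W` for `W : S`. -/
structure HHS (X : Type*) [MetricSpace X] (S : Type*) (C : S → Type*)
    [∀ W, MetricSpace (C W)] where
  /-- `X` is a quasigeodesic space -/
  qg : ℝ
  qg_one : 1 ≤ qg
  quasigeodesic : ∀ x y : X, ∃ q : ℝ → X,
    IsQGOn qg qg (Set.Icc 0 (dist x y)) q ∧ q 0 = x ∧ q (dist x y) = y
  /-- the uniform hyperbolicity constant -/
  δ : ℝ
  δ_nonneg : 0 ≤ δ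
  geodesicC : ∀ W, IsGeodesicSpace (C W)
  hyperbolicC : ∀ W, DeltaHyperbolic δ (C W)
  ξ : ℝ
  ξ_nonneg : 0 ≤ ξ
  /-- the projections `π_W : X → subsets of C W` -/
  π : (W : S) → X → Set (C W)
  π_nonempty : ∀ W x, (π W x).Nonempty
  π_bounded : ∀ W x, Bornology.IsBounded (π W x)
  π_diam : ∀ W x, Metric.diam (π W x) ≤ ξ
  π_coarseLipschitz : ∀ W x y, Metric.diam (π W x ∪ π W y) ≤ ξ * dist x y + ξ
  π_quasiconvex : ∀ W, QuasiconvexSet ξ (⋃ x : X, π W x)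
  /-- nesting (non-strict) -/
  nest : S → S → Prop
  nest_refl : ∀ U, nest U U
  nest_antisymm : ∀ U V, nest U V → nest V U → U = V
  nest_trans : ∀ U V W, nest U V → nest V W → nest U W
  /-- the unique `⊑`-maximal domain -/
  top : S
  nest_top : ∀ U, nest U top
  /-- orthogonality -/
  orth : S → S → Prop
  orth_symm : ∀ U V, orth U V → orth V U
  orth_irrefl : ∀ U, ¬ orth U U
  nest_orth : ∀ U V W, nest V W → orth W U → orth V U
  orth_not_nest : ∀ U V, orth U V → ¬ nest U V
  container : ∀ T U, nest U T → (∃ V, nest V T ∧ orth V U) →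
    ∃ W, nest W T ∧ W ≠ T ∧ ∀ V, nest V T → orth V U → nest V W
  κ₀ : ℝ
  κ₀_nonneg : 0 ≤ κ₀
  /-- the relative projections `ρ V W = ρ^V_W ⊆ C W` (relevant when `V ⋔ W` or `V ⊏ W`) -/
  ρ : (V W : S) → Set (C W)
  ρ_bounded : ∀ V W, Bornology.IsBounded (ρ V W)
  ρ_diam : ∀ V W, Metric.diam (ρ V W) ≤ ξ
  ρ_nonempty : ∀ V W,
    ((¬ orth V W ∧ ¬ nest V W ∧ ¬ nest W V) ∨ (nest V W ∧ V ≠ W)) → (ρ V W).Nonempty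
  /-- the relative projection maps `ρmap W V = ρ^W_V : C W → subsets of C V` (for `V ⊏ W`) -/
  ρmap : (W V : S) → C W → Set (C V)
  consistency_t : ∀ (x : X) (V W : S), ¬ orth V W → ¬ nest V W → ¬ nest W V →
    min (Metric.diam (π W x ∪ ρ V W)) (Metric.diam (π V x ∪ ρ W V)) ≤ κ₀
  consistency_n : ∀ (x : X) (V W : S), nest V W → V ≠ W →
    min (Metric.diam (π W x ∪ ρ V W))
      (Metric.diam (π V x ∪ ⋃ p ∈ π W x, ρmap W V p)) ≤ κ₀
  ρ_coherence : ∀ U V W : S, nest U V →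
    ((nest V W ∧ V ≠ W) ∨ ((¬ orth V W ∧ ¬ nest V W ∧ ¬ nest W V) ∧ ¬ orth W U)) →
    Metric.diam (ρ U W ∪ ρ V W) ≤ κ₀
  /-- finite complexity -/
  cplx : ℕ
  complexity : ∀ (k : ℕ) (f : Fin k → S),
    (∀ i j : Fin k, i < j → nest (f i) (f j) ∧ f i ≠ f j) → k ≤ cplx
  /-- large links -/
  lam : ℝ
  lam_one : 1 ≤ lam
  E₀ : ℝ
  E₀_ge : max ξ κ₀ ≤ E₀
  large_links : ∀ (W : S) (x x' : X), ∃ T : Finset S,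
    (T.card : ℝ) ≤ lam * Metric.diam (π W x ∪ π W x') + lam ∧
    (∀ Ti ∈ T, nest Ti W ∧ Ti ≠ W) ∧
    (∀ T' : S, nest T' W → T' ≠ W →
      E₀ ≤ Metric.diam (π T' x ∪ π T' x') → ∃ Ti ∈ T, nest T' Ti) ∧
    (∀ Ti ∈ T, Metric.diam (π W x ∪ ρ Ti W) ≤
      lam * Metric.diam (π W x ∪ π W x') + lam)
  /-- bounded geodesic image -/
  bgiAx : ∀ (W V : S), nest V W → V ≠ W → ∀ (a b : C W) (f : ℝ → C W),
    IsGeodesicFrom f a b →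
    Metric.diam (⋃ s ∈ Set.Icc (0 : ℝ) (dist a b), ρmap W V (f s)) ≤ E₀ ∨
    ∃ s ∈ Set.Icc (0 : ℝ) (dist a b), ∃ p ∈ ρ V W, dist (f s) p ≤ E₀
  /-- partial realization -/
  alpha : ℝ
  alpha_nonneg : 0 ≤ alpha
  partial_realization : ∀ J : Finset S,
    (∀ V ∈ J, ∀ W ∈ J, V ≠ W → orth V W) →
    ∀ p : (V : S) → C V, (∀ V ∈ J, ∃ z : X, p V ∈ π V z) →
    ∃ x : X,
      (∀ V ∈ J, Metric.diam (π V x ∪ {p V}) ≤ alpha) ∧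
      (∀ V ∈ J, ∀ W : S, nest V W → V ≠ W → Metric.diam (π W x ∪ ρ V W) ≤ alpha) ∧
      (∀ V ∈ J, ∀ W : S, ¬ orth W V → ¬ nest W V → ¬ nest V W →
        Metric.diam (π W x ∪ ρ V W) ≤ alpha)
  /-- uniqueness -/
  θu : ℝ → ℝ
  uniqueness : ∀ (κ : ℝ) (x y : X), θu κ ≤ dist x y →
    ∃ V, κ ≤ Metric.diam (π V x ∪ π V y)
  /-- the HHS is normalized -/
  C₀ : ℝ
  normalized : ∀ (W : S) (c : C W), ∃ x : X, ∃ p ∈ π W x, dist c p ≤ C₀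
  /-- a fixed constant exceeding every structural constant -/
  E : ℝ
  E_big : δ < E ∧ ξ < E ∧ κ₀ < E ∧ E₀ < E ∧ lam < E ∧ alpha < E ∧ C₀ < E ∧ qg < E ∧ 0 < E

namespace HHS

variable {X : Type*} [MetricSpace X] {S : Type*} {C : S → Type*} [∀ W, MetricSpace (C W)]

/-- Proper nesting `U ⊏ V`. -/
def pnest (H : HHS X S C) (U V : S) : Prop := H.nest U V ∧ U ≠ V

/-- Transversality `U ⋔ V`: neither orthogonal nor `⊑`-comparable. -/
def transv (H : HHS X S C) (U V : S) : Prop :=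
  ¬ H.orth U V ∧ ¬ H.nest U V ∧ ¬ H.nest V U

/-- `d_U (x, y) = diam (π_U x ∪ π_U y)`. -/
noncomputable def dU (H : HHS X S C) (U : S) (x y : X) : ℝ :=
  Metric.diam (H.π U x ∪ H.π U y)

/-- The set of `K`-relevant domains for the pair `x, y`. -/
def Rel (H : HHS X S C) (K : ℝ) (x y : X) : Set S := {U | K ≤ H.dU U x y}

end HHS

variable {X : Type*} [MetricSpace X] {S : Type*} {C : S → Type*} [∀ W, MetricSpace (C W)]

/-!
Large links, applied recursively down the nesting order (whose chains have length at most
`cplx`), show that below a domain `W` with `d_W < M` there are at most `(λM + λ + 1)^depth`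
domains that are `K`-relevant and separated from `W` by no `M`-relevant domain. Since every
`d_U` is bounded by `ξ d(x, y) + ξ`, this already makes `Rel_K` finite. A `K`-relevant domain
lies below a `⊑`-minimal `M`-relevant domain containing it (or below the top domain), and
each `W` is attached in this way to at most `1 + R (d_W + 1)` domains, with `R` depending only
on `M` and the HHS. So `|Rel_K|` is linear in `∑_{Rel_M} d_U`, and each domain of
`Rel_K ∖ Rel_M` adds less than `M` to the sum.
-/

theorem Set.finite_and_ncard_le_sum_of_subset_biUnion {α ι : Type*} {s : Set α} {T : Finset ι}
    {t : ι → Set α} {b : ι → ℝ} (hs : s ⊆ ⋃ i ∈ T, t i)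
    (ht : ∀ i ∈ T, (t i).Finite ∧ ((t i).ncard : ℝ) ≤ b i) :
    s.Finite ∧ (s.ncard : ℝ) ≤ ∑ i ∈ T, b i := by
  have hfin : (⋃ i ∈ T, t i).Finite := T.finite_toSet.biUnion fun i hi => (ht i hi).1
  refine ⟨hfin.subset hs, ?_⟩
  calc (s.ncard : ℝ) ≤ (⋃ i ∈ T, t i).ncard := by exact_mod_cast Set.ncard_le_ncard hs hfin
    _ ≤ ∑ i ∈ T, ((t i).ncard : ℝ) := by exact_mod_cast T.set_ncard_biUnion_le t
    _ ≤ ∑ i ∈ T, b i := Finset.sum_le_sum fun i hi => (ht i hi).2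

theorem Set.finite_and_ncard_le_of_subset_insert_biUnion {α ι : Type*} {s : Set α} {a : α}
    {T : Finset ι} {t : ι → Set α} {b : ℝ} (hs : s ⊆ insert a (⋃ i ∈ T, t i))
    (ht : ∀ i ∈ T, (t i).Finite ∧ ((t i).ncard : ℝ) ≤ b) :
    s.Finite ∧ (s.ncard : ℝ) ≤ 1 + T.card * b := by
  obtain ⟨hfin, hcard⟩ := Set.finite_and_ncard_le_sum_of_subset_biUnion subset_rfl ht
  rw [Finset.sum_const, nsmul_eq_mul] at hcard
  refine ⟨(hfin.insert a).subset hs, ?_⟩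
  calc (s.ncard : ℝ) ≤ (insert a (⋃ i ∈ T, t i)).ncard := by
        exact_mod_cast Set.ncard_le_ncard hs (hfin.insert a)
    _ ≤ (⋃ i ∈ T, t i).ncard + 1 := by exact_mod_cast Set.ncard_insert_le _ _
    _ ≤ 1 + T.card * b := by linarith

theorem tsum_ite_le_eq_sum_toFinset {α : Type*} {f : α → ℝ} {K : ℝ}
    (hfin : {a | K ≤ f a}.Finite) :
    (∑' a, if K ≤ f a then f a else 0) = ∑ a ∈ hfin.toFinset, f a := by
  rw [tsum_eq_sum (s := hfin.toFinset) fun a ha => if_neg (by simpa using ha)]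
  exact Finset.sum_congr rfl fun a ha => if_pos (by simpa using ha)

namespace HHS

section Nesting

variable {H : HHS X S C} {T U V W : S}

theorem pnest_of_pnest_of_nest (hUV : H.pnest U V) (hVW : H.nest V W) : H.pnest U W :=
  ⟨H.nest_trans U V W hUV.1 hVW, by
    rintro rfl
    exact hUV.2 (H.nest_antisymm U V hUV.1 hVW)⟩

variable (H) in
theorem exists_nest_minimal {s : Set S} (hs : s.Finite) (hne : s.Nonempty) :
    ∃ U ∈ s, ∀ V ∈ s, H.nest V U → V = U := by
  let _ : LE S := ⟨H.nest⟩
  have : IsTrans S (· ≤ ·) := ⟨H.nest_trans⟩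
  obtain ⟨U, hU, hmin⟩ := hs.exists_minimal hne
  exact ⟨U, hU, fun V hV hVU => H.nest_antisymm V U hVU (hmin hV hVU)⟩

variable (H) in
def DepthLE (n : ℕ) (W : S) : Prop :=
  ∀ (k : ℕ) (f : Fin k → S), (∀ i j, i < j → H.pnest (f i) (f j)) →
    (∀ i, H.pnest (f i) W) → k ≤ n

theorem pnest_snoc {k : ℕ} {f : Fin k → S} (hf : ∀ i j, i < j → H.pnest (f i) (f j))
    (hW : ∀ i, H.pnest (f i) W) (i j : Fin (k + 1)) (hij : i < j) :
    H.pnest ((Fin.snoc f W : Fin (k + 1) → S) i) ((Fin.snoc f W : Fin (k + 1) → S) j) := by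
  induction j using Fin.lastCases with
  | last =>
    induction i using Fin.lastCases with
    | last => exact absurd hij (lt_irrefl _)
    | cast i => simpa using hW i
  | cast j =>
    induction i using Fin.lastCases with
    | last => exact absurd hij (not_lt.2 (Fin.le_last _))
    | cast i => simpa using hf i j (by simpa using hij)

variable (H) in
theorem depthLE_cplx (W : S) : H.DepthLE H.cplx W := fun k f hf hW =>
  Nat.le_of_succ_le (H.complexity (k + 1) (Fin.snoc f W) (pnest_snoc hf hW))

theorem DepthLE.of_pnest {n : ℕ} (hW : H.DepthLE (n + 1) W) (hT : H.pnest T W) :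
    H.DepthLE n T := fun k f hf hfT =>
  Nat.le_of_succ_le_succ <| hW (k + 1) (Fin.snoc f T) (pnest_snoc hf hfT) <|
    Fin.lastCases (by simpa using hT) fun i => by simpa using pnest_of_pnest_of_nest (hfT i) hT.1

theorem DepthLE.not_pnest (hW : H.DepthLE 0 W) : ¬ H.pnest T W := fun hT =>
  absurd (hW 1 (fun _ => T) (fun i j hij => (hij.ne (Subsingleton.elim i j)).elim) fun _ => hT)
    (by norm_num)

end Nesting

section Counting

variable {H : HHS X S C} {K M : ℝ} {x y : X}

variable (H) in
def relUnblockedBelow (K M : ℝ) (x y : X) (W : S) : Set S :=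
  {V | H.nest V W ∧ K ≤ H.dU V x y ∧ ∀ U, H.nest V U → H.pnest U W → H.dU U x y < M}

variable (M x y) in
theorem exists_relUnblockedBelow_subset (hK : H.E₀ ≤ K) (W : S) :
    ∃ T : Finset S, (T.card : ℝ) ≤ H.lam * H.dU W x y + H.lam ∧
      (∀ Ti ∈ T, H.pnest Ti W) ∧
      H.relUnblockedBelow K M x y W ⊆ insert W
        (⋃ Ti ∈ T.filter (H.dU · x y < M), H.relUnblockedBelow K M x y Ti) := by
  obtain ⟨T, hcard, hTW, hcover, -⟩ := H.large_links W x y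
  refine ⟨T, hcard, hTW, ?_⟩
  rintro V ⟨hVW, hVK, hV⟩
  by_cases hVeq : V = W
  · exact Or.inl hVeq
  obtain ⟨Ti, hTi, hVTi⟩ := hcover V hVW hVeq (hK.trans hVK)
  refine Or.inr (Set.mem_biUnion (Finset.mem_filter.2 ⟨hTi, hV Ti hVTi (hTW Ti hTi)⟩) ?_)
  exact ⟨hVTi, hVK, fun U hVU hUTi => hV U hVU (pnest_of_pnest_of_nest hUTi (hTW Ti hTi).1)⟩

theorem relUnblockedBelow_finite_ncard_le_of_lt (hK : H.E₀ ≤ K) (n : ℕ) {W : S}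
    (hW : H.DepthLE n W) (hWM : H.dU W x y < M) :
    (H.relUnblockedBelow K M x y W).Finite ∧
      ((H.relUnblockedBelow K M x y W).ncard : ℝ) ≤ (H.lam * M + H.lam + 1) ^ n := by
  have hlam : 1 ≤ H.lam := H.lam_one
  have hM : 0 ≤ M := Metric.diam_nonneg.trans hWM.le
  induction n generalizing W with
  | zero =>
    obtain ⟨T, -, hTW, hsub⟩ := exists_relUnblockedBelow_subset M x y hK W
    obtain ⟨hfin, hle⟩ := Set.finite_and_ncard_le_of_subset_insert_biUnion (b := 0) hsub
      fun Ti hTi => absurd (hTW Ti (Finset.mem_filter.1 hTi).1) hW.not_pnest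
    exact ⟨hfin, by simpa using hle⟩
  | succ n ih =>
    obtain ⟨T, hcard, hTW, hsub⟩ := exists_relUnblockedBelow_subset M x y hK W
    obtain ⟨hfin, hle⟩ := Set.finite_and_ncard_le_of_subset_insert_biUnion hsub fun Ti hTi =>
      have hTi := Finset.mem_filter.1 hTi
      ih (hW.of_pnest (hTW Ti hTi.1)) hTi.2
    have hTcard : ((T.filter (H.dU · x y < M)).card : ℝ) ≤ H.lam * M + H.lam :=
      calc _ ≤ (T.card : ℝ) := Nat.cast_le.2 (Finset.card_filter_le _ _)
        _ ≤ H.lam * H.dU W x y + H.lam := hcard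
        _ ≤ H.lam * M + H.lam := by gcongr
    have hQ : 1 ≤ (H.lam * M + H.lam + 1) ^ n := one_le_pow₀ (by nlinarith)
    refine ⟨hfin, hle.trans ?_⟩
    rw [pow_succ]
    nlinarith

variable (H) in
/-- `1 + rootCountFactor M * (d_W + 1)` bounds the number of `K`-relevant domains whose
`⊑`-minimal `M`-relevant container is `W`. -/
def rootCountFactor (M : ℝ) : ℝ := H.lam * (H.lam * M + H.lam + 1) ^ H.cplx

theorem rootCountFactor_nonneg (hM : 0 ≤ M) : 0 ≤ H.rootCountFactor M :=
  have := H.lam_one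
  mul_nonneg (by linarith) (pow_nonneg (by positivity) _)

theorem relUnblockedBelow_finite_ncard_le (hK : H.E₀ ≤ K) (hM : 0 ≤ M) (W : S) :
    (H.relUnblockedBelow K M x y W).Finite ∧
      ((H.relUnblockedBelow K M x y W).ncard : ℝ) ≤
        1 + H.rootCountFactor M * (H.dU W x y + 1) := by
  obtain ⟨T, hcard, hTW, hsub⟩ := exists_relUnblockedBelow_subset M x y hK W
  obtain ⟨hfin, hle⟩ := Set.finite_and_ncard_le_of_subset_insert_biUnion hsub fun Ti hTi =>
    have hTi := Finset.mem_filter.1 hTi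
    relUnblockedBelow_finite_ncard_le_of_lt hK H.cplx (H.depthLE_cplx Ti) hTi.2
  have hTcard : ((T.filter (H.dU · x y < M)).card : ℝ) ≤ H.lam * H.dU W x y + H.lam :=
    (Nat.cast_le.2 (Finset.card_filter_le _ _)).trans hcard
  have hQ : 0 ≤ (H.lam * M + H.lam + 1) ^ H.cplx := pow_nonneg (by nlinarith [H.lam_one]) _
  refine ⟨hfin, hle.trans ?_⟩
  unfold rootCountFactor
  nlinarith

theorem rel_subset_rel (hKM : K ≤ M) : H.Rel M x y ⊆ H.Rel K x y := fun _ hU => hKM.trans hU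

theorem rel_subset_biUnion_relUnblockedBelow [DecidableEq S] (hfin : (H.Rel M x y).Finite) :
    H.Rel K x y ⊆ ⋃ W ∈ insert H.top hfin.toFinset, H.relUnblockedBelow K M x y W := by
  intro V hV
  by_cases hne : {U | U ∈ H.Rel M x y ∧ H.nest V U}.Nonempty
  · obtain ⟨U₀, ⟨hU₀M, hVU₀⟩, hmin⟩ :=
      H.exists_nest_minimal (hfin.subset fun U hU => hU.1) hne
    refine Set.mem_biUnion (Finset.mem_insert_of_mem (hfin.mem_toFinset.2 hU₀M))
      ⟨hVU₀, hV, fun U hVU hUU₀ => ?_⟩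
    by_contra hU
    exact hUU₀.2 (hmin U ⟨le_of_not_gt hU, hVU⟩ hUU₀.1)
  · refine Set.mem_biUnion (Finset.mem_insert_self _ _) ⟨H.nest_top V, hV, fun U hVU _ => ?_⟩
    by_contra hU
    exact hne ⟨U, le_of_not_gt hU, hVU⟩

theorem rel_finite (hK : H.E₀ ≤ K) (x y : X) : (H.Rel K x y).Finite := by
  have hM : 0 ≤ H.ξ * dist x y + H.ξ + 1 := by have := H.ξ_nonneg; positivity
  refine (relUnblockedBelow_finite_ncard_le hK hM H.top).1.subset fun V hV =>
    ⟨H.nest_top V, hV, fun U _ _ => ?_⟩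
  exact (H.π_coarseLipschitz U x y).trans_lt (lt_add_one _)

theorem ncard_rel_le (hK : H.E₀ ≤ K) (hM : 1 ≤ M) (hfin : (H.Rel M x y).Finite) :
    ((H.Rel K x y).ncard : ℝ) ≤
      (1 + 2 * H.rootCountFactor M) * ∑ U ∈ hfin.toFinset, H.dU U x y
        + (1 + H.rootCountFactor M * (M + 1)) := by
  classical
  set R := H.rootCountFactor M
  set s := hfin.toFinset
  have hR : 0 ≤ R := rootCountFactor_nonneg (by linarith)
  have hcover := (Set.finite_and_ncard_le_sum_of_subset_biUnion
    (rel_subset_biUnion_relUnblockedBelow hfin) fun W _ =>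
      relUnblockedBelow_finite_ncard_le hK (by linarith) W).2
  have hcard : (s.card : ℝ) ≤ ∑ U ∈ s, H.dU U x y := by
    simpa using s.card_nsmul_le_sum (H.dU · x y) 1 fun U hU => hM.trans (hfin.mem_toFinset.1 hU)
  have hs : ∑ W ∈ s, (1 + R * (H.dU W x y + 1)) ≤ (1 + 2 * R) * ∑ U ∈ s, H.dU U x y := by
    have hsplit : ∑ W ∈ s, (1 + R * (H.dU W x y + 1))
        = s.card * (1 + R) + R * ∑ U ∈ s, H.dU U x y := by
      rw [Finset.mul_sum, ← nsmul_eq_mul, ← Finset.sum_const, ← Finset.sum_add_distrib]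
      exact Finset.sum_congr rfl fun _ _ => by ring
    nlinarith
  have htop : ∑ W ∈ insert H.top s, (1 + R * (H.dU W x y + 1))
      ≤ (1 + R * (M + 1)) + ∑ W ∈ s, (1 + R * (H.dU W x y + 1)) := by
    by_cases htop : H.top ∈ s
    · rw [Finset.insert_eq_of_mem htop]
      nlinarith
    · rw [Finset.sum_insert htop]
      have : H.dU H.top x y < M := lt_of_not_ge fun h => htop (hfin.mem_toFinset.2 h)
      nlinarith
  linarith

theorem sum_rel_le (hK : H.E₀ ≤ K) (hKM : K ≤ M) (hM : 1 ≤ M) (hfinK : (H.Rel K x y).Finite)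
    (hfinM : (H.Rel M x y).Finite) :
    ∑ U ∈ hfinK.toFinset, H.dU U x y ≤
      (1 + M * (1 + 2 * H.rootCountFactor M)) * ∑ U ∈ hfinM.toFinset, H.dU U x y
        + M * (1 + H.rootCountFactor M * (M + 1)) := by
  classical
  have hsub : hfinM.toFinset ⊆ hfinK.toFinset :=
    Set.Finite.toFinset_subset_toFinset.2 (rel_subset_rel hKM)
  have hlow : ∑ U ∈ hfinK.toFinset \ hfinM.toFinset, H.dU U x y
      ≤ (hfinK.toFinset.card : ℝ) * M :=
    calc _ ≤ ((hfinK.toFinset \ hfinM.toFinset).card : ℝ) * M := by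
          simpa using Finset.sum_le_card_nsmul _ _ M fun U hU =>
            le_of_not_ge fun h => (Finset.mem_sdiff.1 hU).2 (hfinM.mem_toFinset.2 h)
      _ ≤ _ := by gcongr; exact Finset.sdiff_subset
  have hcard := ncard_rel_le hK hM hfinM
  rw [Set.ncard_eq_toFinset_card _ hfinK] at hcard
  rw [← Finset.sum_sdiff hsub]
  nlinarith

end Counting

end HHS

/-- **Changing thresholds in the distance formula sum** (Corollary `DF accounting`). -/
theorem df_accounting (H : HHS X S C) (K₂ : ℝ) :
    ∃ A B : ℝ, 1 ≤ A ∧ 0 ≤ B ∧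
      ∀ K₁ : ℝ, 50 * H.E < K₁ → K₁ + 100 * H.E ≤ K₂ →
      ∀ x y : X,
        -- both sums have finite support (hence are finite)
        {U : S | K₁ ≤ H.dU U x y}.Finite ∧
        {U : S | K₂ ≤ H.dU U x y}.Finite ∧
        (∑' U : S, if K₂ ≤ H.dU U x y then H.dU U x y else 0) ≤
          (∑' U : S, if K₁ ≤ H.dU U x y then H.dU U x y else 0) ∧
        (∑' U : S, if K₁ ≤ H.dU U x y then H.dU U x y else 0) ≤
          A * (∑' U : S, if K₂ ≤ H.dU U x y then H.dU U x y else 0) + B := by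
  set R := H.rootCountFactor K₂
  refine ⟨max 1 (1 + K₂ * (1 + 2 * R)), max 0 (K₂ * (1 + R * (K₂ + 1))),
    le_max_left _ _, le_max_left _ _, fun K₁ hK₁ hK₁₂ x y => ?_⟩
  obtain ⟨-, -, -, hE₀, -, -, -, hqg, -⟩ := H.E_big
  have hE₀K₁ : H.E₀ ≤ K₁ := by linarith [H.qg_one]
  have hK₁K₂ : K₁ ≤ K₂ := by linarith [H.qg_one]
  have hK₂ : 1 ≤ K₂ := by linarith [H.qg_one]
  have hfin₁ := H.rel_finite hE₀K₁ x y
  have hfin₂ := hfin₁.subset (HHS.rel_subset_rel hK₁K₂)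
  have hsum₂ : 0 ≤ ∑ U ∈ hfin₂.toFinset, H.dU U x y :=
    Finset.sum_nonneg fun _ _ => Metric.diam_nonneg
  rw [tsum_ite_le_eq_sum_toFinset hfin₁, tsum_ite_le_eq_sum_toFinset hfin₂]
  refine ⟨hfin₁, hfin₂, ?_, ?_⟩
  · exact Finset.sum_le_sum_of_subset_of_nonneg
      (Set.Finite.toFinset_subset_toFinset.2 (HHS.rel_subset_rel hK₁K₂))
      fun _ _ _ => Metric.diam_nonneg
  · calc _ ≤ _ := HHS.sum_rel_le hE₀K₁ hK₁K₂ hK₂ hfin₁ hfin₂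
      _ ≤ _ := add_le_add (mul_le_mul_of_nonneg_right (le_max_right _ _) hsum₂)
          (le_max_right _ _)
end

section
/- Behrstock-type inequality for transverse triples (the content of Lemma 'cluster same' at the level of ρ-sets): Let 𝒳 be a hierarchically hyperbolic space. If U, V, W ∈ 𝔖 are pairwise transverse, then it is impossible that both d_U(ρ^V_U, ρ^W_U) > 100E and d_V(ρ^U_V, ρ^W_V) > 100E; that is, min{ d_U(ρ^V_U, ρ^W_U), d_V(ρ^U_V, ρ^W_V) } ≤ 100E. -/
variable {X : Type*} [MetricSpace X] {S : Type*} {C : S → Type*} [∀ W, MetricSpace (C W)]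


private lemma diam_union_le_aux {Y : Type*} [MetricSpace Y] {P A B : Set Y}
    (hP : P.Nonempty) (hPA : Bornology.IsBounded (P ∪ A))
    (hPB : Bornology.IsBounded (P ∪ B)) :
    Metric.diam (A ∪ B) ≤ Metric.diam (P ∪ A) + Metric.diam (P ∪ B) := by
  obtain ⟨p, hp⟩ := hP
  apply Metric.diam_le_of_forall_dist_le
    (by positivity)
  rintro a (ha | ha) b (hb | hb)
  · calc dist a b ≤ Metric.diam (P ∪ A) :=
        Metric.dist_le_diam_of_mem hPA (Set.mem_union_right _ ha)
          (Set.mem_union_right _ hb)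
      _ ≤ _ := le_add_of_nonneg_right Metric.diam_nonneg
  · calc dist a b ≤ dist a p + dist p b := dist_triangle _ _ _
      _ ≤ Metric.diam (P ∪ A) + Metric.diam (P ∪ B) :=
        add_le_add (Metric.dist_le_diam_of_mem hPA (Set.mem_union_right _ ha)
            (Set.mem_union_left _ hp))
          (Metric.dist_le_diam_of_mem hPB (Set.mem_union_left _ hp)
            (Set.mem_union_right _ hb))
  · calc dist a b ≤ dist a p + dist p b := dist_triangle _ _ _
      _ ≤ Metric.diam (P ∪ B) + Metric.diam (P ∪ A) :=
        add_le_add (Metric.dist_le_diam_of_mem hPB (Set.mem_union_right _ ha)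
            (Set.mem_union_left _ hp))
          (Metric.dist_le_diam_of_mem hPA (Set.mem_union_left _ hp)
            (Set.mem_union_right _ hb))
      _ = _ := add_comm _ _
  · calc dist a b ≤ Metric.diam (P ∪ B) :=
        Metric.dist_le_diam_of_mem hPB (Set.mem_union_right _ ha)
          (Set.mem_union_right _ hb)
      _ ≤ _ := le_add_of_nonneg_left Metric.diam_nonneg

/-- **Behrstock-type inequality for transverse triples** (content of Lemma `cluster same`). -/
theorem behrstock_transverse_triple (H : HHS X S C) (U V W : S)
    (hUV : H.transv U V) (hUW : H.transv U W) (hVW : H.transv V W) :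
    min (Metric.diam (H.ρ V U ∪ H.ρ W U)) (Metric.diam (H.ρ U V ∪ H.ρ W V))
      ≤ 100 * H.E := by
  classical
  -- X is nonempty
  obtain ⟨cW, -⟩ := H.ρ_nonempty U W (Or.inl hUW)
  obtain ⟨z, -, -, -⟩ := H.normalized W cW
  set p : (V' : S) → C V' := fun V' => (H.π_nonempty V' z).choose with hp
  obtain ⟨x, -, -, h3⟩ := H.partial_realization {W}
    (by
      intro a ha b hb hne
      simp only [Finset.mem_singleton] at ha hb
      exact absurd (ha.trans hb.symm) hne)
    p
    (by
      intro V' hV'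
      exact ⟨z, (H.π_nonempty V' z).choose_spec⟩)
  have hxU : Metric.diam (H.π U x ∪ H.ρ W U) ≤ H.alpha :=
    h3 W (Finset.mem_singleton_self W) U hUW.1 hUW.2.1 hUW.2.2
  have hxV : Metric.diam (H.π V x ∪ H.ρ W V) ≤ H.alpha :=
    h3 W (Finset.mem_singleton_self W) V hVW.1 hVW.2.1 hVW.2.2
  have hcons := H.consistency_t x V U
    (fun h => hUV.1 (H.orth_symm _ _ h)) hUV.2.2 hUV.2.1
  have hbπU := H.π_bounded U x
  have hbπV := H.π_bounded V x
  have hE := H.E_big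
  have hbound : H.κ₀ + H.alpha ≤ 100 * H.E := by
    have := hE.2.2.1; have := hE.2.2.2.2.2.1; have := hE.2.2.2.2.2.2.2.2
    linarith
  rcases min_le_iff.mp hcons with hc | hc
  · refine min_le_of_left_le (le_trans ?_ hbound)
    calc Metric.diam (H.ρ V U ∪ H.ρ W U)
        ≤ Metric.diam (H.π U x ∪ H.ρ V U) + Metric.diam (H.π U x ∪ H.ρ W U) :=
          diam_union_le_aux (H.π_nonempty U x) (hbπU.union (H.ρ_bounded V U))
            (hbπU.union (H.ρ_bounded W U))
      _ ≤ H.κ₀ + H.alpha := add_le_add hc hxU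
  · refine min_le_of_right_le (le_trans ?_ hbound)
    calc Metric.diam (H.ρ U V ∪ H.ρ W V)
        ≤ Metric.diam (H.π V x ∪ H.ρ U V) + Metric.diam (H.π V x ∪ H.ρ W V) :=
          diam_union_le_aux (H.π_nonempty V x) (hbπV.union (H.ρ_bounded U V))
            (hbπV.union (H.ρ_bounded W V))
      _ ≤ H.κ₀ + H.alpha := add_le_add hc hxV
end

section
/- Finiteness of relevant sets (Corollary 'rel sets are finite'): Let 𝒳 be a hierarchically hyperbolic space. For any x, y ∈ 𝒳, the set Rel_E(x, y) = {U ∈ 𝔖 : d_U(x, y) ≥ E} is finite. -/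
variable {X : Type*} [MetricSpace X] {S : Type*} {C : S → Type*} [∀ W, MetricSpace (C W)]

/-- **Finiteness of relevant sets** (Corollary `rel sets are finite`). -/
theorem rel_sets_are_finite (H : HHS X S C) (x y : X) :
    (H.Rel H.E x y).Finite := by
  suffices h : ∀ k : ℕ, ∀ W : S,
      (∀ (m : ℕ) (f : Fin m → S),
        (∀ i j : Fin m, i < j → H.nest (f i) (f j) ∧ f i ≠ f j) →
        (∀ i, H.nest (f i) W) → m ≤ k) →
      {U ∈ H.Rel H.E x y | H.nest U W}.Finite by
    have hfin := h H.cplx H.top (fun m f hf _ => H.complexity m f hf)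
    refine Set.Finite.subset hfin ?_
    intro U hU
    exact ⟨hU, H.nest_top U⟩
  intro k
  induction k with
  | zero =>
    intro W hW
    exfalso
    have := hW 1 (fun _ => W) (fun i j hij => by omega) (fun _ => H.nest_refl W)
    omega
  | succ k ih =>
    intro W hW
    obtain ⟨T, -, hT2, hT3, -⟩ := H.large_links W x y
    have hsub : {U ∈ H.Rel H.E x y | H.nest U W} ⊆
        {W} ∪ ⋃ Ti ∈ T, {U ∈ H.Rel H.E x y | H.nest U Ti} := by
      rintro U ⟨hUrel, hUW⟩
      by_cases hU : U = W
      · exact Or.inl hU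
      · right
        have hE : H.E₀ ≤ Metric.diam (H.π U x ∪ H.π U y) :=
          le_trans (le_of_lt H.E_big.2.2.2.1) hUrel
        obtain ⟨Ti, hTi, hUTi⟩ := hT3 U hUW hU hE
        exact Set.mem_biUnion hTi ⟨hUrel, hUTi⟩
    refine Set.Finite.subset (Set.Finite.union (Set.finite_singleton W)
      (Set.Finite.biUnion T.finite_toSet ?_)) hsub
    intro Ti hTi
    apply ih Ti
    intro m f hf hfTi
    have hnestTi : H.nest Ti W := (hT2 Ti hTi).1
    have hTiW : Ti ≠ W := (hT2 Ti hTi).2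
    -- extend the chain by appending W
    set g : Fin (m + 1) → S := fun i => if h : (i : ℕ) < m then f ⟨i, h⟩ else W with hg
    have hchain : ∀ i j : Fin (m + 1), i < j → H.nest (g i) (g j) ∧ g i ≠ g j := by
      intro i j hij
      have hij' : (i : ℕ) < (j : ℕ) := hij
      by_cases hj : (j : ℕ) < m
      · have hi : (i : ℕ) < m := lt_trans hij' hj
        simp only [hg, dif_pos hi, dif_pos hj]
        exact hf ⟨i, hi⟩ ⟨j, hj⟩ hij'
      · have hi : (i : ℕ) < m := by omega
        simp only [hg, dif_pos hi, dif_neg hj]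
        constructor
        · exact H.nest_trans _ Ti W (hfTi ⟨i, hi⟩) hnestTi
        · intro heq
          apply hTiW
          exact H.nest_antisymm Ti W hnestTi (heq ▸ hfTi ⟨i, hi⟩)
    have hnest : ∀ i : Fin (m + 1), H.nest (g i) W := by
      intro i
      by_cases hi : (i : ℕ) < m
      · simp only [hg, dif_pos hi]
        exact H.nest_trans _ Ti W (hfTi ⟨i, hi⟩) hnestTi
      · simp only [hg, dif_neg hi]
        exact H.nest_refl W
    have := hW (m + 1) g hchain hnest
    omega
end

section
/- No backtracking for quasigeodesics in hyperbolic spaces (Lemma 'no backtracking hyper'): For every L ≥ 1 and δ ≥ 0 there exists M = M(L, δ) > 0 such that the following holds. Let X be a geodesic δ-hyperbolic metric space, let a ≥ 0, let q : [0, a] → X be an (L,L)-quasigeodesic, and let t ∈ [0, a] satisfy d(q(0), q(t)) + 1 ≥ diam(q([0, a])). Then a − t < M. -/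
/-!
Geodesics joining two points of an `(L, L)`-quasigeodesic `q` stay uniformly close to `q`. Let
`v` be a point of the geodesic farthest from `q`, at distance `ρ`. A detour through `q` avoiding
the ball of radius `(ρ - 1) / 2` about `v` takes `O(ρ)` steps of bounded length, while thinness of
triangles, applied along a bisection of the detour, brings it within `δ log₂ ρ + O(1)` of `v`;
hence `ρ` is bounded.

Now take `v` on `[q t, q a]` at distance from `q t` a little less than the Gromov product
`(q 0 | q a)_{q t}`, which the diameter hypothesis makes at least `(d(q t, q a) - 1) / 2`.
Thinness puts `v` near `[q t, q 0]`, so `v` is close both to `q` on `[t, a]` and to `q` on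
`[0, t]`. The two parameters are then close, so `v` is near `q` at a parameter near `t`, which
bounds `d(q t, v)`, hence `d(q t, q a)` and finally `a - t`.
-/

open Set Filter Topology Metric

section

variable {X : Type*} [MetricSpace X]

namespace IsGeodesicFrom

variable {f : ℝ → X} {x y : X} {σ : ℝ}

lemma dist_left (hf : IsGeodesicFrom f x y) (hσ : σ ∈ Icc 0 (dist x y)) :
    dist x (f σ) = σ := by
  rw [← hf.1, hf.2.2 0 ⟨le_rfl, dist_nonneg⟩ σ hσ, zero_sub, abs_neg, abs_of_nonneg hσ.1]

lemma dist_right (hf : IsGeodesicFrom f x y) (hσ : σ ∈ Icc 0 (dist x y)) :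
    dist (f σ) y = dist x y - σ := by
  conv_lhs => rw [← hf.2.1]
  rw [hf.2.2 σ hσ _ ⟨dist_nonneg, le_rfl⟩, abs_sub_comm, abs_of_nonneg (sub_nonneg.2 hσ.2)]

lemma dist_add_dist (hf : IsGeodesicFrom f x y) (hσ : σ ∈ Icc 0 (dist x y)) :
    dist x (f σ) + dist (f σ) y = dist x y := by
  rw [hf.dist_left hσ, hf.dist_right hσ]
  ring

lemma sub_dist_le_two_mul_dist (hf : IsGeodesicFrom f x y) (hσ : σ ∈ Icc 0 (dist x y))
    (m : X) :
    dist m x + dist m y - dist x y ≤ 2 * dist m (f σ) := by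
  linarith [hf.dist_add_dist hσ, dist_triangle m (f σ) x, dist_triangle m (f σ) y,
    dist_comm x (f σ)]

lemma continuousOn (hf : IsGeodesicFrom f x y) : ContinuousOn f (Icc 0 (dist x y)) :=
  (LipschitzOnWith.of_dist_le_mul fun s hs t ht => by
    rw [hf.2.2 s hs t ht, NNReal.coe_one, one_mul, Real.dist_eq]).continuousOn

lemma reverse (hf : IsGeodesicFrom f x y) : IsGeodesicFrom (fun s => f (dist x y - s)) y x := by
  have hmem : ∀ s ∈ Icc 0 (dist y x), dist x y - s ∈ Icc 0 (dist x y) := fun s hs => by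
    rw [dist_comm] at hs
    exact ⟨sub_nonneg.2 hs.2, sub_le_self _ hs.1⟩
  refine ⟨by simpa using hf.2.1, by simpa [dist_comm] using hf.1, fun s hs t ht => ?_⟩
  rw [hf.2.2 _ (hmem s hs) _ (hmem t ht), abs_sub_comm]
  ring_nf

lemma restrict (hf : IsGeodesicFrom f x y) {u v : ℝ} (hu : u ∈ Icc 0 (dist x y))
    (hv : v ∈ Icc 0 (dist x y)) (huv : u ≤ v) :
    IsGeodesicFrom (fun s => f (u + s)) (f u) (f v) := by
  have huv' : dist (f u) (f v) = v - u := by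
    rw [hf.2.2 u hu v hv, abs_sub_comm, abs_of_nonneg (sub_nonneg.2 huv)]
  refine ⟨by simp, by simp [huv'], fun s hs t ht => ?_⟩
  rw [huv'] at hs ht
  rw [hf.2.2 _ ⟨by linarith [hs.1, hu.1], by linarith [hs.2, hv.2]⟩
    _ ⟨by linarith [ht.1, hu.1], by linarith [ht.2, hv.2]⟩]
  ring_nf

end IsGeodesicFrom

namespace IsQGOn

variable {L C : ℝ} {D : Set ℝ} {q : ℝ → X}

lemma mono (hq : IsQGOn L C D q) {D' : Set ℝ} (hD : D' ⊆ D) : IsQGOn L C D' q :=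
  fun s hs t ht => hq s (hD hs) t (hD ht)

lemma abs_sub_le (hq : IsQGOn L C D q) (hL : 0 < L) {s t : ℝ} (hs : s ∈ D) (ht : t ∈ D) :
    |s - t| ≤ L * (dist (q s) (q t) + C) := by
  have := (hq s hs t ht).1
  rw [div_sub' hL.ne', div_le_iff₀ hL] at this
  linarith

lemma isBounded_image {α ω : ℝ} (hq : IsQGOn L C (Icc α ω) q) (hL : 0 ≤ L) :
    Bornology.IsBounded (q '' Icc α ω) := by
  refine isBounded_iff.2 ⟨L * (ω - α) + C, ?_⟩
  rintro _ ⟨s, hs, rfl⟩ _ ⟨t, ht, rfl⟩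
  have hst : |s - t| ≤ ω - α := by simpa [Real.dist_eq] using Real.dist_le_of_mem_Icc hs ht
  linarith [(hq s hs t ht).2, mul_le_mul_of_nonneg_left hst hL]

lemma dist_le_of_dist_le_of_dist_le {α ω : ℝ}
    (hq : IsQGOn L C (Icc α ω) q) (hL : 0 < L) {s₁ t s₂ r₁ r₂ : ℝ} {v : X}
    (hs₁ : s₁ ∈ Icc α ω) (hs₂ : s₂ ∈ Icc α ω) (h₁ : s₁ ≤ t) (h₂ : t ≤ s₂)
    (hv₁ : dist v (q s₁) ≤ r₁) (hv₂ : dist v (q s₂) ≤ r₂) :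
    dist (q t) v ≤ L * (L * (r₁ + r₂ + C)) + C + r₂ := by
  have ht : t ∈ Icc α ω := ⟨hs₁.1.trans h₁, h₂.trans hs₂.2⟩
  have hd : dist (q s₂) (q s₁) ≤ r₁ + r₂ := by linarith [dist_triangle_left (q s₂) (q s₁) v]
  have hs : s₂ - t ≤ L * (r₁ + r₂ + C) :=
    calc s₂ - t ≤ |s₂ - s₁| := le_trans (by linarith) (le_abs_self _)
      _ ≤ L * (dist (q s₂) (q s₁) + C) := hq.abs_sub_le hL hs₂ hs₁
      _ ≤ L * (r₁ + r₂ + C) := mul_le_mul_of_nonneg_left (by linarith) hL.le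
  have hts₂ := (hq t ht s₂ hs₂).2
  rw [abs_sub_comm, abs_of_nonneg (sub_nonneg.2 h₂)] at hts₂
  linarith [dist_triangle_right (q t) v (q s₂), mul_le_mul_of_nonneg_left hs hL.le]

end IsQGOn

structure IsMetricChain (c : ℝ) (S : Set X) (x y : X) (n : ℕ) (z : ℕ → X) : Prop where
  apply_zero : z 0 = x
  apply_last : z n = y
  dist_succ_le : ∀ i < n, dist (z i) (z (i + 1)) ≤ c
  mem : ∀ i ≤ n, z i ∈ S

namespace IsMetricChain

variable {c : ℝ} {S : Set X} {x y w : X} {n m : ℕ} {z : ℕ → X}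

lemma mono_set (hz : IsMetricChain c S x y n z) {T : Set X} (hST : S ⊆ T) :
    IsMetricChain c T x y n z :=
  ⟨hz.apply_zero, hz.apply_last, hz.dist_succ_le, fun i hi => hST (hz.mem i hi)⟩

lemma mono (hz : IsMetricChain c S x y n z) {c' : ℝ} (hc : c ≤ c') : IsMetricChain c' S x y n z :=
  ⟨hz.apply_zero, hz.apply_last, fun i hi => (hz.dist_succ_le i hi).trans hc, hz.mem⟩

lemma take (hz : IsMetricChain c S x y n z) (hm : m ≤ n) (hw : z m = w) :
    IsMetricChain c S x w m z :=
  ⟨hz.apply_zero, hw, fun i hi => hz.dist_succ_le i (by omega), fun i hi => hz.mem i (by omega)⟩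

lemma reverse (hz : IsMetricChain c S x y n z) : IsMetricChain c S y x n (fun i => z (n - i)) where
  apply_zero := by simpa using hz.apply_last
  apply_last := by simpa using hz.apply_zero
  dist_succ_le i hi := by
    rw [dist_comm, show n - i = n - (i + 1) + 1 by omega]
    exact hz.dist_succ_le _ (by omega)
  mem i _ := hz.mem _ (by omega)

lemma append (hz : IsMetricChain c S x y n z) {z' : ℕ → X} (hz' : IsMetricChain c S y w m z') :
    IsMetricChain c S x w (n + m) (fun i => if i ≤ n then z i else z' (i - n)) where
  apply_zero := by simpa using hz.apply_zero
  apply_last := by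
    rcases Nat.eq_zero_or_pos m with rfl | hm
    · simp only [add_zero, le_refl, if_true]
      rw [hz.apply_last, ← hz'.apply_zero, hz'.apply_last]
    · simpa [show ¬n + m ≤ n by omega] using hz'.apply_last
  dist_succ_le i hi := by
    rcases lt_trichotomy i n with hin | rfl | hin
    · simpa [hin.le, show i + 1 ≤ n by omega] using hz.dist_succ_le i hin
    · simpa [hz.apply_last, ← hz'.apply_zero] using hz'.dist_succ_le 0 (by omega)
    · simpa [show ¬i ≤ n by omega, show ¬i + 1 ≤ n by omega, show i + 1 - n = i - n + 1 by omega]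
        using hz'.dist_succ_le (i - n) (by omega)
  mem i hi := by
    split_ifs with hin
    · exact hz.mem i hin
    · exact hz'.mem _ (by omega)

lemma dist_le_of_le_one (hz : IsMetricChain c S x y n z) (hn : n ≤ 1) (hc : 0 ≤ c) :
    dist x y ≤ c := by
  rw [← hz.apply_zero, ← hz.apply_last]
  interval_cases n
  · simpa using hc
  · exact hz.dist_succ_le 0 one_pos

end IsMetricChain

lemma exists_isMetricChain_of_dist_le {p : ℝ → X} {a b A B : ℝ} (hA : 0 ≤ A)
    (hp : ∀ u ∈ uIcc a b, ∀ v ∈ uIcc a b, dist (p u) (p v) ≤ A * |u - v| + B) :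
    ∃ n : ℕ, (n : ℝ) ≤ |b - a| + 2 ∧
      ∃ z, IsMetricChain (A + B) (p '' uIcc a b) (p a) (p b) n z := by
  set n : ℕ := ⌈|b - a|⌉₊ + 1
  have hn : (0 : ℝ) < n := by positivity
  have hceil : |b - a| ≤ n := by
    have := Nat.le_ceil |b - a|
    simp only [n, Nat.cast_add, Nat.cast_one]
    linarith
  set r : ℕ → ℝ := fun i => a + i / n * (b - a)
  have hr : ∀ i ≤ n, r i ∈ uIcc a b := fun i hi => by
    have h0 : (0 : ℝ) ≤ i / n := by positivity
    have h1 : (i : ℝ) / n ≤ 1 := (div_le_one hn).2 (by exact_mod_cast hi)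
    rcases le_total a b with hab | hab
    · rw [uIcc_of_le hab]; constructor <;> nlinarith
    · rw [uIcc_of_ge hab]; constructor <;> nlinarith
  refine ⟨n, ?_, fun i => p (r i), ⟨by simp [r], by simp [r, hn.ne'], fun i hi => ?_,
    fun i hi => mem_image_of_mem p (hr i hi)⟩⟩
  · simp only [n, Nat.cast_add, Nat.cast_one]
    linarith [Nat.ceil_lt_add_one (abs_nonneg (b - a))]
  · have hstep : |r i - r (i + 1)| ≤ 1 := by
      have : r i - r (i + 1) = -((b - a) / n) := by simp only [r]; push_cast; ring
      rw [this, abs_neg, abs_div, abs_of_pos hn, div_le_one hn]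
      exact hceil
    linarith [hp _ (hr i hi.le) _ (hr (i + 1) hi), mul_le_mul_of_nonneg_left hstep hA]

lemma IsGeodesicFrom.exists_isMetricChain {f : ℝ → X} {x y : X} (hf : IsGeodesicFrom f x y) :
    ∃ n : ℕ, (n : ℝ) ≤ dist x y + 2 ∧ ∃ z, IsMetricChain 1 (f '' Icc 0 (dist x y)) x y n z := by
  have hd := uIcc_of_le (dist_nonneg (x := x) (y := y))
  obtain ⟨n, hn, z, hz⟩ := exists_isMetricChain_of_dist_le (p := f) (a := 0) (b := dist x y)
    (A := 1) (B := 0) zero_le_one fun u hu v hv => by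
      rw [hd] at hu hv
      rw [hf.2.2 u hu v hv, one_mul, add_zero]
  rw [hd, hf.1, hf.2.1, add_zero] at hz
  exact ⟨n, by simpa [abs_of_nonneg dist_nonneg] using hn, z, hz⟩

lemma IsQGOn.exists_isMetricChain {L C α ω s t : ℝ} {q : ℝ → X} (hq : IsQGOn L C (Icc α ω) q)
    (hL : 0 ≤ L) (hs : s ∈ Icc α ω) (ht : t ∈ Icc α ω) :
    ∃ n : ℕ, (n : ℝ) ≤ |t - s| + 2 ∧
      ∃ z, IsMetricChain (L + C) (q '' Icc α ω) (q s) (q t) n z := by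
  obtain ⟨n, hn, z, hz⟩ := exists_isMetricChain_of_dist_le hL fun u hu v hv =>
    (hq u (uIcc_subset_Icc hs ht hu) v (uIcc_subset_Icc hs ht hv)).2
  exact ⟨n, hn, z, hz.mono_set (image_mono (uIcc_subset_Icc hs ht))⟩

variable {δ L : ℝ}

/-- Bisect the chain, applying thinness once per level. -/
lemma DeltaHyperbolic.exists_mem_dist_le_of_isMetricChain (hgeo : IsGeodesicSpace X)
    (hhyp : DeltaHyperbolic δ X) {c : ℝ} (hc : 0 ≤ c) {S : Set X} (k : ℕ) :
    ∀ {n : ℕ} {x y : X} {z : ℕ → X} {f : ℝ → X} {σ : ℝ}, n ≤ 2 ^ k →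
      IsMetricChain c S x y n z → IsGeodesicFrom f x y → σ ∈ Icc 0 (dist x y) →
      ∃ p ∈ S, dist (f σ) p ≤ δ * k + c := by
  induction k with
  | zero =>
    intro n x y z f σ hn hz hf hσ
    refine ⟨x, hz.apply_zero ▸ hz.mem 0 (Nat.zero_le n), ?_⟩
    rw [dist_comm, hf.dist_left hσ, CharP.cast_eq_zero, mul_zero, zero_add]
    exact hσ.2.trans (hz.dist_le_of_le_one (by simpa using hn) hc)
  | succ k ih =>
    intro n x y z f σ hn hz hf hσ
    obtain ⟨g, hg⟩ := hgeo y (z (n / 2))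
    obtain ⟨h, hh⟩ := hgeo x (z (n / 2))
    obtain ⟨p, hp, hfp⟩ := hhyp x y (z (n / 2)) f g h hf hg hh σ hσ
    have hpow : 2 ^ (k + 1) = 2 * 2 ^ k := by ring
    obtain ⟨p', hp'S, hpp'⟩ : ∃ p' ∈ S, dist p p' ≤ δ * k + c := by
      rcases hp with ⟨τ, hτ, rfl⟩ | ⟨τ, hτ, rfl⟩
      · exact ih (by omega) (hz.reverse.take (Nat.sub_le n (n / 2))
          (by rw [Nat.sub_sub_self (Nat.div_le_self n 2)])) hg hτ
      · exact ih (by omega) (hz.take (Nat.div_le_self n 2) rfl) hh hτ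
    refine ⟨p', hp'S, (dist_triangle _ p _).trans ?_⟩
    push_cast
    linarith

/-- The right-hand side of `hlt` is twice the Gromov product `(y|z)_x`. -/
lemma DeltaHyperbolic.exists_mem_image_dist_le_of_lt (hhyp : DeltaHyperbolic δ X)
    {x y z : X} {f g h : ℝ → X} (hf : IsGeodesicFrom f x y) (hg : IsGeodesicFrom g y z)
    (hh : IsGeodesicFrom h x z) {σ : ℝ} (hσ : σ ∈ Icc 0 (dist x y))
    (hlt : 2 * (σ + δ) < dist x y + dist x z - dist y z) :
    ∃ p ∈ h '' Icc 0 (dist x z), dist (f σ) p ≤ δ := by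
  obtain ⟨p, ⟨τ, hτ, rfl⟩ | hp, hfp⟩ := hhyp x y z f g h hf hg hh σ hσ
  · have := hg.dist_add_dist hτ
    have := hf.dist_left hσ
    have := hf.dist_right hσ
    have := dist_triangle4 x (f σ) (g τ) z
    have := dist_triangle_right (f σ) y (g τ)
    linarith
  · exact ⟨p, hp, hfp⟩

lemma exists_isMetricChain_detour (hL : 1 ≤ L) (hgeo : IsGeodesicSpace X) {α ω : ℝ}
    {q : ℝ → X} (hq : IsQGOn L L (Icc α ω) q) {s₁ s₂ ρ : ℝ} {u w m : X}
    (hs₁ : s₁ ∈ Icc α ω) (hs₂ : s₂ ∈ Icc α ω) (hfar : ∀ s ∈ Icc α ω, ρ ≤ dist m (q s))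
    (hu : ρ ≤ dist m u) (hw : ρ ≤ dist m w) (huw : dist u w ≤ 2 * ρ)
    (h₁ : dist u (q s₁) ≤ ρ + 1) (h₂ : dist (q s₂) w ≤ ρ + 1) :
    ∃ N : ℕ, (N : ℝ) ≤ (4 * L + 2) * ρ + (L ^ 2 + 2 * L + 8) ∧
      ∃ z, IsMetricChain (L + L) {p | ρ - 1 ≤ 2 * dist m p} u w N z := by
  have hqS : q '' Icc α ω ⊆ {p | ρ - 1 ≤ 2 * dist m p} := by
    rintro _ ⟨s, hs, rfl⟩
    show ρ - 1 ≤ 2 * dist m (q s)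
    linarith [hfar s hs, dist_nonneg (x := m) (y := q s)]
  have hgS : ∀ {x y : X} {g : ℝ → X}, IsGeodesicFrom g x y → ρ ≤ dist m x → ρ ≤ dist m y →
      dist x y ≤ ρ + 1 → g '' Icc 0 (dist x y) ⊆ {p | ρ - 1 ≤ 2 * dist m p} := by
    rintro x y g hg hx hy hxy _ ⟨τ, hτ, rfl⟩
    show ρ - 1 ≤ 2 * dist m (g τ)
    linarith [hg.sub_dist_le_two_mul_dist hτ m]
  obtain ⟨g₁, hg₁⟩ := hgeo u (q s₁)
  obtain ⟨g₃, hg₃⟩ := hgeo (q s₂) w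
  obtain ⟨n₁, hn₁, z₁, hz₁⟩ := hg₁.exists_isMetricChain
  obtain ⟨n₂, hn₂, z₂, hz₂⟩ := hq.exists_isMetricChain (by linarith) hs₁ hs₂
  obtain ⟨n₃, hn₃, z₃, hz₃⟩ := hg₃.exists_isMetricChain
  have hs : |s₂ - s₁| ≤ L * (4 * ρ + 2 + L) := by
    have hd : dist (q s₂) (q s₁) ≤ 4 * ρ + 2 := by
      linarith [dist_triangle4 (q s₂) w u (q s₁), dist_comm w u]
    exact (hq.abs_sub_le (by linarith) hs₂ hs₁).trans
      (mul_le_mul_of_nonneg_left (by linarith) (by linarith))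
  refine ⟨n₁ + n₂ + n₃, ?_, _, (((hz₁.mono_set (hgS hg₁ hu (hfar s₁ hs₁) h₁)).mono
    (by linarith)).append (hz₂.mono_set hqS)).append
    ((hz₃.mono_set (hgS hg₃ (hfar s₂ hs₂) hw h₂)).mono (by linarith))⟩
  push_cast
  linarith

/-- `hfar` and `hnear` say that `f σ₀` is, up to `1`, a point of `f` farthest from `q`. -/
lemma exists_le_clog_of_forall_le_dist {δ : ℝ} (hL : 1 ≤ L) (hgeo : IsGeodesicSpace X)
    (hhyp : DeltaHyperbolic δ X) {α ω : ℝ} {q f : ℝ → X} (hαω : α ≤ ω)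
    (hq : IsQGOn L L (Icc α ω) q) (hf : IsGeodesicFrom f (q α) (q ω)) {σ₀ ρ : ℝ}
    (hσ₀ : σ₀ ∈ Icc 0 (dist (q α) (q ω))) (hρ : 0 ≤ ρ)
    (hfar : ∀ s ∈ Icc α ω, ρ ≤ dist (f σ₀) (q s))
    (hnear : ∀ σ ∈ Icc 0 (dist (q α) (q ω)), ∃ s ∈ Icc α ω, dist (f σ) (q s) ≤ ρ + 1) :
    ∃ N : ℕ, ρ ≤ 2 * δ * Nat.clog 2 N + (4 * L + 1) ∧
      (N : ℝ) ≤ (4 * L + 2) * ρ + (L ^ 2 + 2 * L + 8) := by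
  have hleft : ρ ≤ σ₀ := by
    simpa [dist_comm, hf.dist_left hσ₀] using hfar α ⟨le_rfl, hαω⟩
  have hright : ρ ≤ dist (q α) (q ω) - σ₀ := by
    simpa [hf.dist_right hσ₀] using hfar ω ⟨hαω, le_rfl⟩
  have hy : σ₀ - ρ ∈ Icc 0 (dist (q α) (q ω)) := ⟨by linarith, by linarith [hσ₀.2]⟩
  have hz : σ₀ + ρ ∈ Icc 0 (dist (q α) (q ω)) := ⟨by linarith [hσ₀.1], by linarith⟩
  have hy₀ : dist (f σ₀) (f (σ₀ - ρ)) = ρ := by simp [hf.2.2 _ hσ₀ _ hy, abs_of_nonneg hρ]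
  have hz₀ : dist (f σ₀) (f (σ₀ + ρ)) = ρ := by simp [hf.2.2 _ hσ₀ _ hz, abs_of_nonneg hρ]
  have hyz : dist (f (σ₀ - ρ)) (f (σ₀ + ρ)) = 2 * ρ := by
    rw [hf.2.2 _ hy _ hz, abs_sub_comm, abs_of_nonneg (by linarith)]
    ring
  obtain ⟨s₁, hs₁, h₁⟩ := hnear _ hy
  obtain ⟨s₂, hs₂, h₂⟩ := hnear _ hz
  obtain ⟨N, hN, z, hchain⟩ := exists_isMetricChain_detour hL hgeo hq hs₁ hs₂ hfar hy₀.ge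
    hz₀.ge hyz.le h₁ (by rwa [dist_comm])
  obtain ⟨p, hpS, hp⟩ := hhyp.exists_mem_dist_le_of_isMetricChain hgeo (by linarith)
    (Nat.clog 2 N) (Nat.le_pow_clog one_lt_two N) hchain (hf.restrict hy hz (by linarith))
    (σ := ρ) ⟨hρ, by linarith⟩
  rw [sub_add_cancel] at hp
  exact ⟨N, by linarith [hpS.out], hN⟩

end

lemma exists_forall_le_of_le_clog {A B C D : ℝ} (hA : 0 ≤ A) (hC : 0 ≤ C) :
    ∃ R, 0 ≤ R ∧ ∀ (ρ : ℝ) (N : ℕ), ρ ≤ A * Nat.clog 2 N + B → (N : ℝ) ≤ C * ρ + D →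
      ρ ≤ R := by
  have hlim :
      Tendsto (fun k : ℕ => (C * A * k + (C * (A + B) + D)) / 2 ^ k) atTop (𝓝 0) := by
    have h1 := tendsto_pow_const_div_const_pow_of_one_lt 1 one_lt_two
    simp only [pow_one] at h1
    have h2 := tendsto_pow_atTop_nhds_zero_of_lt_one (r := (2 : ℝ)⁻¹) (by norm_num) (by norm_num)
    have h := (h1.const_mul (C * A)).add (h2.const_mul (C * (A + B) + D))
    rw [mul_zero, mul_zero, add_zero] at h
    refine h.congr fun k => ?_
    rw [inv_pow]
    ring
  obtain ⟨K, hK⟩ := eventually_atTop.1 (hlim.eventually_lt_const one_pos)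
  refine ⟨max 0 (A * K + B), le_max_left _ _, fun ρ N hρ hN => ?_⟩
  suffices hlog : Nat.clog 2 N ≤ K by
    have : A * (Nat.clog 2 N : ℝ) ≤ A * K :=
      mul_le_mul_of_nonneg_left (by exact_mod_cast hlog) hA
    exact le_max_of_le_right (by linarith)
  by_contra! hlog
  have hN1 : 1 < N := by
    by_contra! h
    simp [Nat.clog_of_right_le_one h] at hlog
  set k := Nat.clog 2 N - 1
  have hk : Nat.clog 2 N = k + 1 := by omega
  have hpow : (2 : ℝ) ^ k < N := by exact_mod_cast Nat.pow_pred_clog_lt_self one_lt_two hN1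
  have hsmall := hK k (by omega)
  rw [div_lt_one (by positivity)] at hsmall
  rw [hk] at hρ
  push_cast at hρ
  nlinarith [mul_le_mul_of_nonneg_left hρ hC]

def GeodesicsNearQuasigeodesics (L R : ℝ) (X : Type*) [MetricSpace X] : Prop :=
  ∀ (α ω : ℝ) (q f : ℝ → X), α ≤ ω → IsQGOn L L (Icc α ω) q → IsGeodesicFrom f (q α) (q ω) →
    ∀ σ ∈ Icc 0 (dist (q α) (q ω)), ∃ s ∈ Icc α ω, dist (f σ) (q s) ≤ R

theorem exists_geodesicsNearQuasigeodesics {L δ : ℝ} (hL : 1 ≤ L) (hδ : 0 ≤ δ) :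
    ∃ R, 0 ≤ R ∧ ∀ (X : Type*) [MetricSpace X], IsGeodesicSpace X → DeltaHyperbolic δ X →
      GeodesicsNearQuasigeodesics L R X := by
  obtain ⟨R, hR0, hR⟩ := exists_forall_le_of_le_clog (A := 2 * δ) (B := 4 * L + 1)
    (C := 4 * L + 2) (D := L ^ 2 + 2 * L + 8) (by positivity) (by positivity)
  refine ⟨R + 1, by positivity, fun X _ hgeo hhyp α ω q f hαω hq hf => ?_⟩
  have hK : (q '' Icc α ω).Nonempty := (nonempty_Icc.2 hαω).image q
  obtain ⟨σ₀, hσ₀, hmax⟩ := isCompact_Icc.exists_isMaxOn (nonempty_Icc.2 dist_nonneg)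
    ((continuous_infDist_pt _).comp_continuousOn hf.continuousOn)
  set ρ := infDist (f σ₀) (q '' Icc α ω)
  have hnear : ∀ σ ∈ Icc 0 (dist (q α) (q ω)), ∃ s ∈ Icc α ω, dist (f σ) (q s) ≤ ρ + 1 := by
    intro σ hσ
    obtain ⟨_, ⟨s, hs, rfl⟩, hlt⟩ := (infDist_lt_iff hK).1 ((hmax hσ).trans_lt (lt_add_one ρ))
    exact ⟨s, hs, hlt.le⟩
  obtain ⟨N, hlog, hN⟩ := exists_le_clog_of_forall_le_dist hL hgeo hhyp hαω hq hf hσ₀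
    infDist_nonneg (fun s hs => infDist_le_dist_of_mem (mem_image_of_mem q hs)) hnear
  have hρ := hR ρ N hlog hN
  intro σ hσ
  obtain ⟨s, hs, hfs⟩ := hnear σ hσ
  exact ⟨s, hs, by linarith⟩

lemma dist_le_of_dist_le_dist_add_one {X : Type*} [MetricSpace X] {L δ R a t : ℝ} {q : ℝ → X}
    (hL : 1 ≤ L) (hδ : 0 ≤ δ) (hgeo : IsGeodesicSpace X) (hhyp : DeltaHyperbolic δ X)
    (hR : GeodesicsNearQuasigeodesics L R X) (hR0 : 0 ≤ R) (hq : IsQGOn L L (Icc 0 a) q)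
    (ht : t ∈ Icc 0 a) (hend : dist (q 0) (q a) ≤ dist (q 0) (q t) + 1) :
    dist (q t) (q a) ≤ 2 * (L * (L * (2 * R + δ + L)) + L + R + δ) + 3 := by
  obtain ⟨f, hf⟩ := hgeo (q t) (q a)
  obtain ⟨g, hg⟩ := hgeo (q a) (q 0)
  obtain ⟨h, hh⟩ := hgeo (q t) (q 0)
  have key : ∀ σ ∈ Icc 0 (dist (q t) (q a)),
      2 * (σ + δ) < dist (q t) (q a) + dist (q t) (q 0) - dist (q a) (q 0) →
      σ ≤ L * (L * (2 * R + δ + L)) + L + R := by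
    intro σ hσ hlt
    obtain ⟨_, ⟨τ, hτ, rfl⟩, hfh⟩ := hhyp.exists_mem_image_dist_le_of_lt hf hg hh hσ hlt
    obtain ⟨s₂, hs₂, h₂⟩ := hR t a q f ht.2 (hq.mono (Icc_subset_Icc_left ht.1)) hf σ hσ
    obtain ⟨s₁, hs₁, h₁⟩ := hR 0 t q _ ht.1 (hq.mono (Icc_subset_Icc_right ht.2)) hh.reverse
      (dist (q t) (q 0) - τ) ⟨by linarith [hτ.2], by linarith [hτ.1, dist_comm (q t) (q 0)]⟩
    rw [sub_sub_cancel] at h₁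
    have := hq.dist_le_of_dist_le_of_dist_le (by linarith) ⟨hs₁.1, hs₁.2.trans ht.2⟩
      ⟨ht.1.trans hs₂.1, hs₂.2⟩ hs₁.2 hs₂.1 (r₁ := R + δ)
      (by linarith [dist_triangle (f σ) (h τ) (q s₁)]) h₂
    rw [hf.dist_left hσ] at this
    linarith
  have htri : dist (q t) (q 0) ≤ dist (q t) (q a) + dist (q a) (q 0) := dist_triangle _ _ _
  by_cases hsmall : dist (q t) (q a) + dist (q t) (q 0) - dist (q a) (q 0) ≤ 2 * (δ + 1)
  · have : 0 ≤ L * (L * (2 * R + δ + L)) := by positivity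
    linarith [dist_comm (q 0) (q a), dist_comm (q 0) (q t)]
  · have := key ((dist (q t) (q a) + dist (q t) (q 0) - dist (q a) (q 0)) / 2 - δ - 1)
      ⟨by linarith, by linarith⟩ (by linarith)
    linarith [dist_comm (q 0) (q a), dist_comm (q 0) (q t)]

/-- **No backtracking for quasigeodesics in hyperbolic spaces**
(Lemma `no backtracking hyper`). -/
theorem no_backtracking_hyper (L δ : ℝ) (hL : 1 ≤ L) (hδ : 0 ≤ δ) :
    ∃ M : ℝ, 0 < M ∧
      ∀ (X : Type*) [MetricSpace X], IsGeodesicSpace X → DeltaHyperbolic δ X →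
        ∀ a : ℝ, 0 ≤ a → ∀ q : ℝ → X, IsQGOn L L (Set.Icc 0 a) q →
          ∀ t ∈ Set.Icc (0 : ℝ) a,
            Metric.diam (q '' Set.Icc 0 a) ≤ dist (q 0) (q t) + 1 →
            a - t < M := by
  obtain ⟨R, hR0, hR⟩ := exists_geodesicsNearQuasigeodesics hL hδ
  set D := 2 * (L * (L * (2 * R + δ + L)) + L + R + δ) + 3
  refine ⟨L * (D + L) + 1, by positivity, fun X _ hgeo hhyp a ha q hq t ht hdiam => ?_⟩
  have hend : dist (q 0) (q a) ≤ dist (q 0) (q t) + 1 :=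
    (dist_le_diam_of_mem (hq.isBounded_image (by linarith)) (mem_image_of_mem q ⟨le_rfl, ha⟩)
      (mem_image_of_mem q ⟨ha, le_rfl⟩)).trans hdiam
  have hD := dist_le_of_dist_le_dist_add_one hL hδ hgeo hhyp (hR X hgeo hhyp) hR0 hq ht hend
  have hat := hq.abs_sub_le (by linarith) ⟨ha, le_rfl⟩ ht
  rw [abs_of_nonneg (sub_nonneg.2 ht.2), dist_comm] at hat
  linarith [mul_le_mul_of_nonneg_left (add_le_add_right hD L) (by linarith : 0 ≤ L)]
end

section
/- Crossing walls have orthogonal labels, and the dimension bound (Lemma 'hyperplane char'(2) and Corollary 'dimension'): Let a hierarchical family of trees be given, with 0-consistent set Q. If two distinct walls of Q, dual to an edge of T_U and an edge of T_V respectively, cross, then U ⊥ V. Consequently, in any family of pairwise-crossing walls the domain labels are pairwise orthogonal (in particular pairwise distinct), and the cardinality of such a family is at most the maximal cardinality of a pairwise-orthogonal subset of 𝒰. -/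
/-- `a` and `b` lie in the same connected component of the tree `G` with the vertex `w`
deleted (equivalently: `a, b ≠ w` and `w` does not lie on the geodesic from `a` to `b`). -/
def treeSameComp {α : Type*} (G : SimpleGraph α) (w a b : α) : Prop :=
  a ≠ w ∧ b ≠ w ∧ G.dist a w + G.dist w b ≠ G.dist a b

/-- `m` is the median of `a`, `b`, `c` in the tree `G`: it lies on all three
pairwise geodesics. -/
def IsTreeMedian {α : Type*} (G : SimpleGraph α) (a b c m : α) : Prop :=
  G.dist a m + G.dist m b = G.dist a b ∧
  G.dist a m + G.dist m c = G.dist a c ∧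
  G.dist b m + G.dist m c = G.dist b c

/-- A hierarchical family of trees: a finite index set `Idx` of domains with relations
`⊏` (proper nesting) and `⊥` (orthogonality), a finite simplicial tree `G U` on the
finite vertex set `Vtx U` for each domain `U`, marked vertices labeled by the finite set
`F`, and relative projection data `δup`/`δdown` satisfying coherence, bounded geodesic
image, and consistency of the marked tuples. -/
structure HFT (Idx : Type*) [Fintype Idx] (Vtx : Idx → Type*) [∀ U, Fintype (Vtx U)]
    (F : Type*) [Fintype F] where
  /-- proper nesting `⊏` -/
  pnest : Idx → Idx → Prop
  /-- orthogonality `⊥` -/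
  orth : Idx → Idx → Prop
  pnest_irrefl : ∀ U, ¬ pnest U U
  pnest_trans : ∀ U V W, pnest U V → pnest V W → pnest U W
  /-- `⊏` has a unique maximal element -/
  max_unique : ∃! m : Idx, ∀ W, ¬ pnest m W
  orth_symm : ∀ U V, orth U V → orth V U
  orth_irrefl : ∀ U, ¬ orth U U
  orth_not_pnest : ∀ U V, orth U V → ¬ pnest U V
  /-- the tree associated to each domain -/
  G : (U : Idx) → SimpleGraph (Vtx U)
  tree : ∀ U, (G U).IsTree
  /-- the marked vertex of `T_U` labeled by `f : F` -/
  mark : (U : Idx) → F → Vtx U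
  /-- every leaf is marked -/
  leaf_marked : ∀ (U : Idx) (v : Vtx U),
    Set.Subsingleton {w : Vtx U | (G U).Adj v w} → ∃ f : F, mark U f = v
  /-- the relative projection vertex `δup V U = δ^V_U ∈ T_U`
  (relevant when `V ⊏ U` or `V ⋔ U`) -/
  δup : (V U : Idx) → Vtx U
  /-- the relative projection map `δdown U V = δ^U_V : T_U → T_V` (for `V ⊏ U`) -/
  δdown : (U V : Idx) → Vtx U → Vtx V
  /-- every component of `T_U − δ^V_U` contains a marked vertex -/
  comp_marked : ∀ V U : Idx,
    (pnest V U ∨ (V ≠ U ∧ ¬ pnest V U ∧ ¬ pnest U V ∧ ¬ orth V U)) →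
    ∀ a : Vtx U, a ≠ δup V U → ∃ f : F, treeSameComp (G U) (δup V U) a (mark U f)
  /-- `δ^U_W = δ^V_W` whenever `U ⊥ V`, `V ⊏ W`, and `U ⊏ W` or `U ⋔ W` -/
  δ_coherent : ∀ U V W : Idx, orth U V → pnest V W →
    (pnest U W ∨ (U ≠ W ∧ ¬ pnest U W ∧ ¬ pnest W U ∧ ¬ orth U W)) →
    δup U W = δup V W
  /-- bounded geodesic image: `δ^U_V` is constant on each component of `T_U − δ^V_U` … -/
  bgi_const : ∀ U V : Idx, pnest V U → ∀ a b : Vtx U,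
    treeSameComp (G U) (δup V U) a b → δdown U V a = δdown U V b
  /-- … with value `f̂_V` on the component containing `f̂_U` -/
  bgi_mark : ∀ U V : Idx, pnest V U → ∀ f : F,
    mark U f ≠ δup V U → δdown U V (mark U f) = mark V f
  /-- the marked tuples are 0-consistent (transverse case) -/
  mark_consistent_t : ∀ (f : F) (U V : Idx),
    (U ≠ V ∧ ¬ pnest U V ∧ ¬ pnest V U ∧ ¬ orth U V) →
    mark U f = δup V U ∨ mark V f = δup U V
  /-- the marked tuples are 0-consistent (nested case) -/
  mark_consistent_n : ∀ (f : F) (U V : Idx), pnest V U →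
    mark U f = δup V U ∨ mark V f = δdown U V (mark U f)

namespace HFT

variable {Idx : Type*} [Fintype Idx] {Vtx : Idx → Type*} [∀ U, Fintype (Vtx U)]
  {F : Type*} [Fintype F]

/-- Transversality `U ⋔ V`: distinct, not nested either way, not orthogonal. -/
def transv (H : HFT Idx Vtx F) (U V : Idx) : Prop :=
  U ≠ V ∧ ¬ H.pnest U V ∧ ¬ H.pnest V U ∧ ¬ H.orth U V

/-- A tuple of vertices is 0-consistent. -/
def ZeroConsistent (H : HFT Idx Vtx F) (x : ∀ U, Vtx U) : Prop :=
  (∀ U V, H.transv U V → x U = H.δup V U ∨ x V = H.δup U V) ∧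
  (∀ U V, H.pnest V U → x U = H.δup V U ∨ x V = H.δdown U V (x U))

/-- The set `Q` of all 0-consistent tuples. -/
def Q (H : HFT Idx Vtx F) : Set (∀ U, Vtx U) := {x | H.ZeroConsistent x}

/-- The ℓ¹ metric on tuples: `d_Q(x, y) = Σ_U d_{T_U}(x_U, y_U)`. -/
noncomputable def dQ (H : HFT Idx Vtx F) (x y : ∀ U, Vtx U) : ℕ :=
  ∑ U : Idx, (H.G U).dist (x U) (y U)

/-- The half-tree of the edge `{u, v}` of `T_U` on the `u`-side: the vertices strictly
closer to `u` than to `v`. -/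
def halfTree (H : HFT Idx Vtx F) (U : Idx) (u v : Vtx U) : Set (Vtx U) :=
  {w | (H.G U).dist w u < (H.G U).dist w v}

/-- The half-space of `Q` determined by the half-tree of `{u, v} ⊆ T_U` on the
`u`-side. -/
def halfSpace (H : HFT Idx Vtx F) (U : Idx) (u v : Vtx U) : Set (∀ W, Vtx W) :=
  {x | x ∈ H.Q ∧ x U ∈ H.halfTree U u v}

/-- Two walls (dual to the edge `{u, v}` of `T_U` and the edge `{u', v'}` of `T_V`)
cross: all four intersections of half-spaces are nonempty. -/
def Crosses (H : HFT Idx Vtx F) (U : Idx) (u v : Vtx U) (V : Idx) (u' v' : Vtx V) :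
    Prop :=
  (H.halfSpace U u v ∩ H.halfSpace V u' v').Nonempty ∧
  (H.halfSpace U u v ∩ H.halfSpace V v' u').Nonempty ∧
  (H.halfSpace U v u ∩ H.halfSpace V u' v').Nonempty ∧
  (H.halfSpace U v u ∩ H.halfSpace V v' u').Nonempty

/-- Two walls are transverse: none of the four inclusions among their half-spaces and
complements holds. -/
def WallTransverse (H : HFT Idx Vtx F) (U : Idx) (u v : Vtx U) (V : Idx)
    (u' v' : Vtx V) : Prop :=
  ¬ (H.halfSpace U u v ⊆ H.halfSpace V u' v') ∧
  ¬ (H.halfSpace U u v ⊆ H.halfSpace V v' u') ∧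
  ¬ (H.halfSpace U v u ⊆ H.halfSpace V u' v') ∧
  ¬ (H.halfSpace U v u ⊆ H.halfSpace V v' u')

end HFT

variable {Idx : Type*} [Fintype Idx] {Vtx : Idx → Type*} [∀ U, Fintype (Vtx U)]
  {F : Type*} [Fintype F]

/-!
The half-trees of an edge `uv` of a tree are the two sides `d(·, u) < d(·, v)` and
`d(·, v) < d(·, u)`, and a geodesic from one side to the other passes through `u` and then `v`.
Hence half-trees of two distinct edges of one tree are nested or disjoint, so walls with the
same label never cross. If `V ⊏ U`, the half-tree of an edge of `T_U` not containing
`δ^V_U` lies in one component of `T_U − δ^V_U`, so by bounded geodesic image it has constant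
`V`-coordinate on `Q` and cannot meet both sides of a wall of `T_V`. If `U ⋔ V`, the point of
`Q` chosen on the sides avoiding `δ^V_U` and `δ^U_V` violates 0-consistency.
-/

namespace SimpleGraph

variable {α : Type*} {G : SimpleGraph α} {a b u v x : α}

lemma Walk.dist_add_dist_le_length (p : G.Walk a b) (hx : x ∈ p.support) :
    G.dist a x + G.dist x b ≤ p.length := by
  classical
  calc G.dist a x + G.dist x b
      ≤ (p.takeUntil x hx).length + (p.dropUntil x hx).length :=
        Nat.add_le_add (dist_le _) (dist_le _)
    _ = p.length := by rw [← Walk.length_append, p.take_spec hx]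

lemma Connected.dist_lt_of_dist_add_dist_le (hG : G.Connected) (ha : G.dist a u < G.dist a v)
    (hx : G.dist a x + G.dist x u ≤ G.dist a u) : G.dist x u < G.dist x v := by
  by_contra! h
  have := hG.dist_triangle (u := a) (v := x) (w := v)
  omega

lemma IsTree.length_eq_dist_of_isPath (hG : G.IsTree) {p : G.Walk a b} (hp : p.IsPath) :
    p.length = G.dist a b := by
  obtain ⟨q, hq, hqlen⟩ := hG.connected.exists_path_of_dist a b
  rw [← hqlen, Subtype.mk.inj ((hG.isAcyclic.subsingleton_path a b).elim ⟨p, hp⟩ ⟨q, hq⟩)]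

/-- The concatenation of geodesics `a → u` and `v → b` through the edge `uv` is a path, since
the first part stays on the `u`-side and the second on the `v`-side; in a tree every path is a
geodesic. -/
lemma IsTree.dist_eq_of_dist_lt_of_dist_lt (hG : G.IsTree) (huv : G.Adj u v)
    (ha : G.dist a u < G.dist a v) (hb : G.dist b v < G.dist b u) :
    G.dist a b = G.dist a u + 1 + G.dist v b := by
  obtain ⟨P, hP, hPlen⟩ := hG.connected.exists_path_of_dist a u
  obtain ⟨R, hR, hRlen⟩ := hG.connected.exists_path_of_dist v b
  have hPside : ∀ x ∈ P.support, G.dist x u < G.dist x v := fun x hx =>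
    hG.connected.dist_lt_of_dist_add_dist_le ha (hPlen ▸ P.dist_add_dist_le_length hx)
  have hRside : ∀ x ∈ R.support, G.dist x v < G.dist x u := fun x hx => by
    refine hG.connected.dist_lt_of_dist_add_dist_le hb ?_
    rw [dist_comm (u := b), dist_comm (u := b) (v := v), add_comm, dist_comm (u := x), ← hRlen]
    exact R.dist_add_dist_le_length hx
  have hpath : (P.append (Walk.cons huv R)).IsPath := by
    rw [Walk.isPath_def, Walk.support_append, Walk.support_cons, List.tail_cons,
      List.nodup_append]
    refine ⟨hP.support_nodup, hR.support_nodup, fun x hxP y hyR hxy => ?_⟩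
    have := hPside x hxP
    have := hRside y hyR
    subst hxy
    omega
  have := hG.length_eq_dist_of_isPath hpath
  rw [Walk.length_append, Walk.length_cons] at this
  omega

lemma IsTree.eq_of_adj_of_dist_lt (hG : G.IsTree) (huv : G.Adj u v) (hab : G.Adj a b)
    (ha : G.dist a u < G.dist a v) (hb : G.dist b v < G.dist b u) : a = u ∧ b = v := by
  have h := hG.dist_eq_of_dist_lt_of_dist_lt huv ha hb
  rw [dist_eq_one_iff_adj.mpr hab] at h
  exact ⟨hG.connected.dist_eq_zero_iff.mp (by omega),
    (hG.connected.dist_eq_zero_iff.mp (by omega)).symm⟩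

lemma IsTree.dist_lt_iff_of_dist_lt (hG : G.IsTree) (huv : G.Adj u v)
    (ha : G.dist a u < G.dist a v) (hb : G.dist b u < G.dist b v)
    (hx : G.dist x v < G.dist x u) : G.dist x a < G.dist x b ↔ G.dist u a < G.dist u b := by
  have hxa := hG.dist_eq_of_dist_lt_of_dist_lt huv ha hx
  have hxb := hG.dist_eq_of_dist_lt_of_dist_lt huv hb hx
  rw [dist_comm (u := a), dist_comm (u := a)] at hxa
  rw [dist_comm (u := b), dist_comm (u := b)] at hxb
  omega

lemma IsTree.treeSameComp_of_dist_lt (hG : G.IsTree) (huv : G.Adj u v)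
    (ha : G.dist a u < G.dist a v) (hb : G.dist b u < G.dist b v)
    (hx : G.dist x v < G.dist x u) : treeSameComp G x a b := by
  have hax := hG.dist_eq_of_dist_lt_of_dist_lt huv ha hx
  have hbx := hG.dist_eq_of_dist_lt_of_dist_lt huv hb hx
  have := hG.connected.dist_triangle (u := a) (v := u) (w := b)
  rw [dist_comm (u := u) (v := b)] at this
  unfold treeSameComp
  rw [dist_comm (u := x) (v := b)]
  refine ⟨?_, ?_, by omega⟩ <;> rintro rfl <;> omega

end SimpleGraph

namespace HFT

variable {H : HFT Idx Vtx F} {U V : Idx} {u v : Vtx U} {u' v' : Vtx V}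

lemma halfTree_disjoint : Disjoint (H.halfTree U u v) (H.halfTree U v u) :=
  Set.disjoint_left.mpr fun _ h h' => lt_asymm (α := ℕ) h h'

lemma Crosses.symm (h : H.Crosses U u v V u' v') : H.Crosses V u' v' U u v := by
  obtain ⟨h₁, h₂, h₃, h₄⟩ := h
  exact ⟨Set.inter_comm _ _ ▸ h₁, Set.inter_comm _ _ ▸ h₃, Set.inter_comm _ _ ▸ h₂,
    Set.inter_comm _ _ ▸ h₄⟩

lemma Crosses.exists_mem_Q_ne (h : H.Crosses U u v V u' v') (p : Vtx U) (q : Vtx V) :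
    ∃ x ∈ H.Q, x U ≠ p ∧ x V ≠ q := by
  have pick : ∀ {s t : Vtx U} {s' t' : Vtx V},
      (H.halfSpace U s t ∩ H.halfSpace V s' t').Nonempty → p ∉ H.halfTree U s t →
        q ∉ H.halfTree V s' t' → ∃ x ∈ H.Q, x U ≠ p ∧ x V ≠ q :=
    fun ⟨x, ⟨hxQ, hxU⟩, _, hxV⟩ hp hq =>
      ⟨x, hxQ, ne_of_mem_of_not_mem hxU hp, ne_of_mem_of_not_mem hxV hq⟩
  have avoid : ∀ {W : Idx} {a b : Vtx W} (r : Vtx W),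
      r ∉ H.halfTree W a b ∨ r ∉ H.halfTree W b a := fun _ =>
    not_and_or.mp fun ⟨hr, hr'⟩ => halfTree_disjoint.notMem_of_mem_left hr hr'
  obtain ⟨h₁, h₂, h₃, h₄⟩ := h
  rcases avoid (a := u) (b := v) p with hp | hp <;>
    rcases avoid (a := u') (b := v') q with hq | hq
  exacts [pick h₁ hp hq, pick h₂ hp hq, pick h₃ hp hq, pick h₄ hp hq]

lemma Crosses.exists_treeSameComp_ne (h : H.Crosses U u v V u' v') (huv : (H.G U).Adj u v)
    (p : Vtx U) : ∃ x ∈ H.Q, ∃ y ∈ H.Q, treeSameComp (H.G U) p (x U) (y U) ∧ x V ≠ y V := by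
  obtain ⟨⟨x₁, hx₁, hx₁'⟩, ⟨x₂, hx₂, hx₂'⟩, ⟨x₃, hx₃, hx₃'⟩, ⟨x₄, hx₄, hx₄'⟩⟩ := h
  rcases lt_or_gt_of_ne ((H.tree U).dist_ne_of_adj p huv) with hp | hp
  · refine ⟨x₃, hx₃.1, x₄, hx₄.1, (H.tree U).treeSameComp_of_dist_lt huv.symm hx₃.2 hx₄.2 hp,
      fun he => halfTree_disjoint.notMem_of_mem_left hx₃'.2 (he ▸ hx₄'.2)⟩
  · refine ⟨x₁, hx₁.1, x₂, hx₂.1, (H.tree U).treeSameComp_of_dist_lt huv hx₁.2 hx₂.2 hp,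
      fun he => halfTree_disjoint.notMem_of_mem_left hx₁'.2 (he ▸ hx₂'.2)⟩

lemma eq_of_treeSameComp {x y : ∀ W, Vtx W} (hx : x ∈ H.Q) (hy : y ∈ H.Q)
    (hVU : H.pnest V U) (hxy : treeSameComp (H.G U) (H.δup V U) (x U) (y U)) : x V = y V := by
  rw [(hx.2 U V hVU).resolve_left hxy.1, (hy.2 U V hVU).resolve_left hxy.2.1]
  exact H.bgi_const U V hVU _ _ hxy

lemma not_crosses_of_pnest (hVU : H.pnest V U) (huv : (H.G U).Adj u v) :
    ¬ H.Crosses U u v V u' v' := fun h => by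
  obtain ⟨x, hx, y, hy, hxy, hne⟩ := h.exists_treeSameComp_ne huv (H.δup V U)
  exact hne (eq_of_treeSameComp hx hy hVU hxy)

lemma not_crosses_of_transv (hUV : H.transv U V) : ¬ H.Crosses U u v V u' v' := fun h => by
  obtain ⟨x, hx, hxU, hxV⟩ := h.exists_mem_Q_ne (H.δup V U) (H.δup U V)
  exact (hx.1 U V hUV).elim hxU hxV

lemma not_crosses_self {u' v' : Vtx U} (huv : (H.G U).Adj u v) (hu'v' : (H.G U).Adj u' v') :
    ¬ H.Crosses U u v U u' v' := fun h => by
  obtain ⟨⟨x₁, hx₁, hx₁'⟩, ⟨x₂, hx₂, hx₂'⟩, ⟨x₃, hx₃, hx₃'⟩, ⟨x₄, hx₄, hx₄'⟩⟩ := h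
  have hT := H.tree U
  rcases lt_or_gt_of_ne (hT.dist_ne_of_adj u' huv) with hu' | hu' <;>
    rcases lt_or_gt_of_ne (hT.dist_ne_of_adj v' huv) with hv' | hv'
  · have h₃ := hT.dist_lt_iff_of_dist_lt huv hu' hv' hx₃.2
    have h₄ := hT.dist_lt_iff_of_dist_lt huv hu' hv' hx₄.2
    exact lt_asymm hx₄'.2 (h₄.mpr (h₃.mp hx₃'.2))
  · obtain ⟨rfl, rfl⟩ := hT.eq_of_adj_of_dist_lt huv hu'v' hu' hv'
    exact halfTree_disjoint.notMem_of_mem_left hx₂.2 hx₂'.2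
  · obtain ⟨rfl, rfl⟩ := hT.eq_of_adj_of_dist_lt huv hu'v'.symm hv' hu'
    exact halfTree_disjoint.notMem_of_mem_left hx₁'.2 hx₁.2
  · have h₁ := hT.dist_lt_iff_of_dist_lt huv.symm hu' hv' hx₁.2
    have h₂ := hT.dist_lt_iff_of_dist_lt huv.symm hu' hv' hx₂.2
    exact lt_asymm hx₂'.2 (h₂.mpr (h₁.mp hx₁'.2))

lemma orth_of_crosses (huv : (H.G U).Adj u v) (hu'v' : (H.G V).Adj u' v')
    (h : H.Crosses U u v V u' v') : H.orth U V := by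
  by_contra horth
  rcases eq_or_ne U V with rfl | hne
  · exact not_crosses_self huv hu'v' h
  by_cases hVU : H.pnest V U
  · exact not_crosses_of_pnest hVU huv h
  by_cases hUV : H.pnest U V
  · exact not_crosses_of_pnest hUV hu'v' h.symm
  exact not_crosses_of_transv ⟨hne, hUV, hVU, horth⟩ h

lemma injective_of_pairwise_orth {ι : Type*} {f : ι → Idx}
    (h : Pairwise fun i j => H.orth (f i) (f j)) : f.Injective := fun i j hij => by
  by_contra hne
  exact H.orth_irrefl (f j) (by simpa only [hij] using h hne)

end HFT

/-- **Crossing walls have orthogonal labels, and the dimension bound**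
(Lemma `hyperplane char`(2) and Corollary `dimension`). -/
theorem crossing_walls_orth (H : HFT Idx Vtx F) :
    -- crossing walls have orthogonal domain labels
    (∀ (U V : Idx) (u v : Vtx U) (u' v' : Vtx V),
      (H.G U).Adj u v → (H.G V).Adj u' v' →
      H.Crosses U u v V u' v' → H.orth U V) ∧
    -- hence a family of pairwise-crossing walls has pairwise orthogonal (in particular
    -- pairwise distinct) labels, and its cardinality is at most the maximal cardinality
    -- of a pairwise-orthogonal subset of the index set
    (∀ (n : ℕ) (lab : Fin n → Idx) (e : (i : Fin n) → Vtx (lab i) × Vtx (lab i)),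
      (∀ i, (H.G (lab i)).Adj (e i).1 (e i).2) →
      (∀ i j, i ≠ j →
        H.Crosses (lab i) (e i).1 (e i).2 (lab j) (e j).1 (e j).2) →
      Function.Injective lab ∧
      (∀ i j, i ≠ j → H.orth (lab i) (lab j)) ∧
      ∃ A : Finset Idx, (∀ a ∈ A, ∀ b ∈ A, a ≠ b → H.orth a b) ∧ n ≤ A.card) := by
  refine ⟨fun U V u v u' v' => HFT.orth_of_crosses, fun n lab e hadj hcr => ?_⟩
  classical
  have horth : ∀ i j, i ≠ j → H.orth (lab i) (lab j) := fun i j hij =>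
    HFT.orth_of_crosses (hadj i) (hadj j) (hcr i j hij)
  have hinj : lab.Injective := HFT.injective_of_pairwise_orth horth
  refine ⟨hinj, horth, Finset.univ.image lab, ?_, ?_⟩
  · simp only [Finset.mem_image, Finset.mem_univ, true_and]
    rintro _ ⟨i, rfl⟩ _ ⟨j, rfl⟩ hij
    exact horth i j (ne_of_apply_ne lab hij)
  · rw [Finset.card_image_of_injective _ hinj, Finset.card_univ, Fintype.card_fin]
end

section
/- Interval characterization in the model (Lemma 'Q intervals'): Let a hierarchical family of trees be given, with 0-consistent set Q. For all â, b̂ ∈ Q, the metric interval I(â, b̂) = {ẑ ∈ Q : d_Q(â, ẑ) + d_Q(ẑ, b̂) = d_Q(â, b̂)} is equal to the set of all ẑ ∈ Q such that, for every U ∈ 𝒰, the vertex ẑ_U lies on the geodesic in T_U from â_U to b̂_U. -/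
variable {Idx : Type*} [Fintype Idx] {Vtx : Idx → Type*} [∀ U, Fintype (Vtx U)]
  {F : Type*} [Fintype F]

/-- **Interval characterization in the model** (Lemma `Q intervals`): the metric interval
between `a, b ∈ Q` consists exactly of the 0-consistent tuples whose every coordinate
lies on the corresponding tree geodesic. -/
theorem q_intervals (H : HFT Idx Vtx F) (a b : ∀ U, Vtx U)
    (ha : a ∈ H.Q) (hb : b ∈ H.Q) :
    {z | z ∈ H.Q ∧ H.dQ a z + H.dQ z b = H.dQ a b} =
      {z | z ∈ H.Q ∧ ∀ U,
        (H.G U).dist (a U) (z U) + (H.G U).dist (z U) (b U) =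
          (H.G U).dist (a U) (b U)} := by
  ext z
  simp only [Set.mem_setOf_eq]
  have hconn : ∀ U, (H.G U).Connected := fun U => (H.tree U).isConnected
  have htri : ∀ U, (H.G U).dist (a U) (b U) ≤
      (H.G U).dist (a U) (z U) + (H.G U).dist (z U) (b U) :=
    fun U => (hconn U).dist_triangle
  constructor
  · rintro ⟨hz, hsum⟩
    refine ⟨hz, ?_⟩
    have key : ∑ U : Idx, (H.G U).dist (a U) (b U) =
        ∑ U : Idx, ((H.G U).dist (a U) (z U) + (H.G U).dist (z U) (b U)) := by
      rw [Finset.sum_add_distrib]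
      exact hsum.symm
    have := (Finset.sum_eq_sum_iff_of_le (fun U _ => htri U)).mp key
    exact fun U => (this U (Finset.mem_univ U)).symm
  · rintro ⟨hz, h⟩
    refine ⟨hz, ?_⟩
    unfold HFT.dQ
    rw [← Finset.sum_add_distrib]
    exact Finset.sum_congr rfl (fun U _ => h U)
end

section
/- The model is a median metric space (Proposition 'Q median structure'): Let a hierarchical family of trees be given, with 0-consistent set Q. For all â, b̂, ĉ ∈ Q, writing m̂ = (m_{T_U}(â_U, b̂_U, ĉ_U))_{U∈𝒰} for the coordinatewise median tuple and I(x̂, ŷ) = {ẑ ∈ Q : d_Q(x̂, ẑ) + d_Q(ẑ, ŷ) = d_Q(x̂, ŷ)} for the metric interval, one has I(â, b̂) ∩ I(â, ĉ) ∩ I(b̂, ĉ) = {m̂}. In particular, (Q, d_Q) is a median metric space whose median is computed coordinatewise by tree medians. -/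
section TreeLemmas

open SimpleGraph

variable {α : Type*} {G : SimpleGraph α}

lemma tree_path_length (ht : G.IsTree) {a b : α} (p : G.Walk a b) (hp : p.IsPath) :
    p.length = G.dist a b := by
  obtain ⟨q, hq, hql⟩ := ht.isConnected.exists_path_of_dist a b
  obtain ⟨r, -, hu⟩ := ht.existsUnique_path a b
  rw [hu p hp, ← hu q hq, hql]

lemma tree_mem_support_dist (ht : G.IsTree) {a b u : α} (p : G.Walk a b) (hp : p.IsPath)
    (hu : u ∈ p.support) : G.dist a u + G.dist u b = G.dist a b := by
  classical
  have hsp := p.take_spec hu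
  have h1 : (p.takeUntil u hu).length = G.dist a u :=
    tree_path_length ht _ (hp.takeUntil hu)
  have h2 : (p.dropUntil u hu).length = G.dist u b :=
    tree_path_length ht _ (hp.dropUntil hu)
  have h3 := tree_path_length ht p hp
  rw [← h1, ← h2, ← h3, ← Walk.length_append, hsp]

lemma tree_mem_support_of_dist (ht : G.IsTree) {a b z : α} (p : G.Walk a b) (hp : p.IsPath)
    (hz : G.dist a z + G.dist z b = G.dist a b) : z ∈ p.support := by
  obtain ⟨r, hr, hrl⟩ := ht.isConnected.exists_path_of_dist a z
  obtain ⟨s, hs, hsl⟩ := ht.isConnected.exists_path_of_dist z b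
  have hlen : (r.append s).length = G.dist a b := by
    rw [Walk.length_append, hrl, hsl, hz]
  have hpath : (r.append s).IsPath := Walk.isPath_of_length_eq_dist _ hlen
  obtain ⟨q, -, hu⟩ := ht.existsUnique_path a b
  have := (hu p hp).trans (hu _ hpath).symm
  rw [this, Walk.mem_support_append_iff]
  exact Or.inl r.end_mem_support

lemma tree_eq_of_dist_eq (ht : G.IsTree) {a b u v : α} (p : G.Walk a b) (hp : p.IsPath)
    (hu : u ∈ p.support) (hv : v ∈ p.support) (hd : G.dist a u = G.dist a v) : u = v := by
  classical
  have key : ∀ w : α, ∀ hw : w ∈ p.support, p.getVert (G.dist a w) = w := by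
    intro w hw
    have h1 : (p.takeUntil w hw).length = G.dist a w :=
      tree_path_length ht _ (hp.takeUntil hw)
    conv_lhs => rw [← p.take_spec hw]
    rw [Walk.getVert_append, ← h1]
    simp
  rw [← key u hu, ← key v hv, hd]

/-- If `m` is a point of a path `s : m → b` minimizing distance to `a`,
then `m` is on the geodesic from `a` to `b`. -/
lemma tree_dist_add_of_min (ht : G.IsTree) {a m b : α} (s : G.Walk m b) (hs : s.IsPath)
    (hmin : ∀ u ∈ s.support, G.dist a m ≤ G.dist a u) :
    G.dist a m + G.dist m b = G.dist a b := by
  obtain ⟨r, hr, hrl⟩ := ht.isConnected.exists_path_of_dist a m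
  have hdisj : ∀ u ∈ r.support, u ∈ s.support → u = m := by
    intro u hur hus
    have h1 := tree_mem_support_dist ht r hr hur
    have h2 := hmin u hus
    have : G.dist u m = 0 := by omega
    exact ((ht.isConnected u m).dist_eq_zero_iff).mp this
  have hpath : (r.append s).IsPath := by
    rw [Walk.isPath_def, Walk.support_append]
    refine List.Nodup.append hr.support_nodup (hs.support_nodup.tail) ?_
    intro u hur hust
    have hus : u ∈ s.support := List.mem_of_mem_tail hust
    have := hdisj u hur hus
    subst this
    have : s.support = u :: s.support.tail := by
      cases s with
      | nil => simp at hust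
      | cons h q => simp [Walk.support_cons]
    exact (List.nodup_cons.mp (this ▸ hs.support_nodup)).1 hust
  have := tree_path_length ht _ hpath
  rw [Walk.length_append, hrl, tree_path_length ht s hs] at this
  exact this

lemma exists_isTreeMedian (ht : G.IsTree) (a b c : α) :
    ∃ m : α, IsTreeMedian G a b c m := by
  classical
  obtain ⟨q, hq, hql⟩ := ht.isConnected.exists_path_of_dist b c
  obtain ⟨m, hmS, hmin⟩ := q.support.toFinset.exists_min_image (fun u => G.dist a u)
    ⟨b, by simp⟩
  rw [List.mem_toFinset] at hmS
  have hmin' : ∀ u ∈ q.support, G.dist a m ≤ G.dist a u := fun u hu =>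
    hmin u (List.mem_toFinset.mpr hu)
  refine ⟨m, ?_, ?_, tree_mem_support_dist ht q hq hmS⟩
  · refine tree_dist_add_of_min ht (q.takeUntil m hmS).reverse
      ((hq.takeUntil hmS).reverse) (fun u hus => ?_)
    rw [Walk.support_reverse, List.mem_reverse] at hus
    exact hmin' u (q.support_takeUntil_subset hmS hus)
  · exact tree_dist_add_of_min ht (q.dropUntil m hmS) (hq.dropUntil hmS)
      (fun u hus => hmin' u (q.support_dropUntil_subset hmS hus))

lemma isTreeMedian_unique (ht : G.IsTree) {a b c m z : α}
    (hm : IsTreeMedian G a b c m) (hz : IsTreeMedian G a b c z) : z = m := by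
  obtain ⟨hm1, hm2, hm3⟩ := hm
  obtain ⟨hz1, hz2, hz3⟩ := hz
  have c1 : G.dist z b = G.dist b z := dist_comm ..
  have c2 : G.dist m b = G.dist b m := dist_comm ..
  have hd : G.dist a z = G.dist a m := by omega
  obtain ⟨p, hp, -⟩ := ht.isConnected.exists_path_of_dist a b
  exact tree_eq_of_dist_eq ht p hp
    (tree_mem_support_of_dist ht p hp hz1) (tree_mem_support_of_dist ht p hp hm1) hd

/-- At most one "leg" of the median tripod passes through a point `w ≠ m`. -/
lemma tree_legs (ht : G.IsTree) {a b m w : α}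
    (hab : G.dist a m + G.dist m b = G.dist a b)
    (ha : G.dist a w + G.dist w m = G.dist a m)
    (hb : G.dist b w + G.dist w m = G.dist b m) : w = m := by
  have htri := ht.isConnected.dist_triangle (u := a) (v := w) (w := b)
  have hcm : G.dist m b = G.dist b m := dist_comm ..
  have hcw : G.dist w b = G.dist b w := dist_comm ..
  have : G.dist w m = 0 := by omega
  exact ((ht.isConnected w m).dist_eq_zero_iff).mp this

/-- If two of the three points coincide, the median is that point. -/
lemma med_pair_aux (ht : G.IsTree) {x y m : α}
    (h : G.dist x m + G.dist m y = G.dist x y) (hxy : x = y) : m = x := by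
  subst hxy
  rw [SimpleGraph.dist_self] at h
  have : G.dist x m = 0 := by omega
  exact (((ht.isConnected x m).dist_eq_zero_iff).mp this).symm

end TreeLemmas

variable {Idx : Type*} [Fintype Idx] {Vtx : Idx → Type*} [∀ U, Fintype (Vtx U)]
  {F : Type*} [Fintype F]


lemma nested_key (H : HFT Idx Vtx F) {U V : Idx} (hpn : H.pnest V U)
    {x : ∀ W, Vtx W} (hx : x ∈ H.Q) {mU : Vtx U} (hmδ : mU ≠ H.δup V U)
    (hP : (H.G U).dist (x U) (H.δup V U) + (H.G U).dist (H.δup V U) mU ≠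
      (H.G U).dist (x U) mU) :
    x V = H.δdown U V mU := by
  have hxδ : x U ≠ H.δup V U := by
    intro he
    apply hP
    rw [he]
    simp
  have hsc : treeSameComp (H.G U) (H.δup V U) (x U) mU := ⟨hxδ, hmδ, hP⟩
  have hcst := H.bgi_const U V hpn (x U) mU hsc
  rcases hx.2 U V hpn with h | h
  · exact absurd h hxδ
  · rw [h, hcst]

/-- **The model is a median metric space** (Proposition `Q median structure`): the three
pairwise metric intervals intersect exactly in the coordinatewise median tuple. -/
theorem q_median_structure (H : HFT Idx Vtx F) (a b c : ∀ U, Vtx U)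
    (ha : a ∈ H.Q) (hb : b ∈ H.Q) (hc : c ∈ H.Q) :
    ∃ m : ∀ U, Vtx U,
      (∀ U, IsTreeMedian (H.G U) (a U) (b U) (c U) (m U)) ∧
      {z | z ∈ H.Q ∧ H.dQ a z + H.dQ z b = H.dQ a b} ∩
          {z | z ∈ H.Q ∧ H.dQ a z + H.dQ z c = H.dQ a c} ∩
          {z | z ∈ H.Q ∧ H.dQ b z + H.dQ z c = H.dQ b c} = {m} := by
  classical
  choose m hm using fun U => exists_isTreeMedian (H.tree U) (a U) (b U) (c U)
  have hmQ : m ∈ H.Q := by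
    refine ⟨fun U V htv => ?_, fun U V hpn => ?_⟩
    · rcases ha.1 U V htv with h1 | h1 <;> rcases hb.1 U V htv with h2 | h2 <;>
        rcases hc.1 U V htv with h3 | h3
      · exact Or.inl ((med_pair_aux (H.tree U) (hm U).1 (h1.trans h2.symm)).trans h1)
      · exact Or.inl ((med_pair_aux (H.tree U) (hm U).1 (h1.trans h2.symm)).trans h1)
      · exact Or.inl ((med_pair_aux (H.tree U) (hm U).2.1 (h1.trans h3.symm)).trans h1)
      · exact Or.inr ((med_pair_aux (H.tree V) (hm V).2.2 (h2.trans h3.symm)).trans h2)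
      · exact Or.inl ((med_pair_aux (H.tree U) (hm U).2.2 (h2.trans h3.symm)).trans h2)
      · exact Or.inr ((med_pair_aux (H.tree V) (hm V).2.1 (h1.trans h3.symm)).trans h1)
      · exact Or.inr ((med_pair_aux (H.tree V) (hm V).1 (h1.trans h2.symm)).trans h1)
      · exact Or.inr ((med_pair_aux (H.tree V) (hm V).1 (h1.trans h2.symm)).trans h1)
    · by_cases hmδ : m U = H.δup V U
      · exact Or.inl hmδ
      right
      by_cases hPa : (H.G U).dist (a U) (H.δup V U) + (H.G U).dist (H.δup V U) (m U) =
          (H.G U).dist (a U) (m U)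
      · by_cases hPb : (H.G U).dist (b U) (H.δup V U) + (H.G U).dist (H.δup V U) (m U) =
            (H.G U).dist (b U) (m U)
        · exact absurd (tree_legs (H.tree U) (hm U).1 hPa hPb).symm hmδ
        · have hPc : ¬ ((H.G U).dist (c U) (H.δup V U) + (H.G U).dist (H.δup V U) (m U) =
              (H.G U).dist (c U) (m U)) :=
            fun h => hmδ (tree_legs (H.tree U) (hm U).2.1 hPa h).symm
          have hB := nested_key H hpn hb hmδ hPb
          have hC := nested_key H hpn hc hmδ hPc
          exact (med_pair_aux (H.tree V) (hm V).2.2 (hB.trans hC.symm)).trans hB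
      · by_cases hPb : (H.G U).dist (b U) (H.δup V U) + (H.G U).dist (H.δup V U) (m U) =
            (H.G U).dist (b U) (m U)
        · have hPc : ¬ ((H.G U).dist (c U) (H.δup V U) + (H.G U).dist (H.δup V U) (m U) =
              (H.G U).dist (c U) (m U)) :=
            fun h => hmδ (tree_legs (H.tree U) (hm U).2.2 hPb h).symm
          have hA := nested_key H hpn ha hmδ hPa
          have hC := nested_key H hpn hc hmδ hPc
          exact (med_pair_aux (H.tree V) (hm V).2.1 (hA.trans hC.symm)).trans hA
        · have hA := nested_key H hpn ha hmδ hPa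
          have hB := nested_key H hpn hb hmδ hPb
          exact (med_pair_aux (H.tree V) (hm V).1 (hA.trans hB.symm)).trans hA
  have key2 : ∀ x y : ∀ W, Vtx W,
      (∀ U, (H.G U).dist (x U) (m U) + (H.G U).dist (m U) (y U) =
        (H.G U).dist (x U) (y U)) →
      H.dQ x m + H.dQ m y = H.dQ x y := by
    intro x y h
    unfold HFT.dQ
    rw [← Finset.sum_add_distrib]
    exact Finset.sum_congr rfl fun U _ => h U
  have e1 := key2 a b fun U => (hm U).1
  have e2 := key2 a c fun U => (hm U).2.1
  have e3 := key2 b c fun U => (hm U).2.2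
  have split : ∀ x y z : ∀ W, Vtx W, H.dQ x z + H.dQ z y = H.dQ x y → ∀ U,
      (H.G U).dist (x U) (z U) + (H.G U).dist (z U) (y U) =
        (H.G U).dist (x U) (y U) := by
    intro x y z h U
    unfold HFT.dQ at h
    rw [← Finset.sum_add_distrib] at h
    exact ((Finset.sum_eq_sum_iff_of_le
      (fun i _ => (H.tree i).isConnected.dist_triangle)).mp h.symm U
      (Finset.mem_univ U)).symm
  refine ⟨m, hm, ?_⟩
  ext z
  simp only [Set.mem_inter_iff, Set.mem_setOf_eq, Set.mem_singleton_iff]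
  constructor
  · rintro ⟨⟨⟨hzQ, h1⟩, -, h2⟩, -, h3⟩
    funext U
    exact isTreeMedian_unique (H.tree U) (hm U)
      ⟨split a b z h1 U, split a c z h2 U, split b c z h3 U⟩
  · rintro rfl
    exact ⟨⟨⟨hmQ, e1⟩, hmQ, e2⟩, hmQ, e3⟩
end
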